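/- arXiv:2310.12437 — 8 statements merged into one kernel-verified Lean document; each statement's English description precedes it below -/
import Mathlib

section
/- Let X be a random vector in ℝ^d and q ∈ [1, ∞). Assume E[|X^j|^q] < ∞ for every coordinate j ∈ {1,…,d}. Then for every κ ≥ 0, the function ρ_q(·, κ) : ℝ^d → [0,1] defined by ρ_q(w, κ) = P(|⟨w, X⟩| > κ ‖w‖_{L^q}) is lower semicontinuous on ℝ^d, where ‖w‖_{L^q} = E[|⟨w, X⟩|^q]^{1/q}. -/
open MeasureTheory

private lemma sum_rpow_le {d : ℕ} {q : ℝ} (hq0 : 0 < q) (c : Fin d → ℝ) (hc : ∀ j, 0 ≤ c j) :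
    (∑ j, c j) ^ q ≤ (d : ℝ) ^ q * ∑ j, c j ^ q := by
  have hS : 0 ≤ ∑ j, c j ^ q := Finset.sum_nonneg fun j _ => Real.rpow_nonneg (hc j) q
  have h1 : ∀ j, c j ≤ (∑ j', c j' ^ q) ^ (1 / q) := by
    intro j
    have hle : c j ^ q ≤ ∑ j', c j' ^ q :=
      Finset.single_le_sum (fun j' _ => Real.rpow_nonneg (hc j') q) (Finset.mem_univ j)
    have : c j = (c j ^ q) ^ (1 / q) := by
      rw [← Real.rpow_mul (hc j), mul_one_div_cancel hq0.ne', Real.rpow_one]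
    rw [this]
    exact Real.rpow_le_rpow (Real.rpow_nonneg (hc j) q) hle (by positivity)
  have h2 : ∑ j, c j ≤ (d : ℝ) * (∑ j', c j' ^ q) ^ (1 / q) := by
    calc ∑ j, c j ≤ ∑ _j : Fin d, (∑ j', c j' ^ q) ^ (1 / q) :=
          Finset.sum_le_sum fun j _ => h1 j
      _ = (d : ℝ) * (∑ j', c j' ^ q) ^ (1 / q) := by
          simp [Finset.sum_const, nsmul_eq_mul]
  calc (∑ j, c j) ^ q ≤ ((d : ℝ) * (∑ j', c j' ^ q) ^ (1 / q)) ^ q :=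
        Real.rpow_le_rpow (Finset.sum_nonneg fun j _ => hc j) h2 hq0.le
    _ = (d : ℝ) ^ q * ((∑ j', c j' ^ q) ^ (1 / q)) ^ q := by
        rw [Real.mul_rpow (by positivity) (Real.rpow_nonneg hS _)]
    _ = (d : ℝ) ^ q * ∑ j', c j' ^ q := by
        rw [← Real.rpow_mul hS, one_div_mul_cancel hq0.ne', Real.rpow_one]

/-- If `E[|X^j|^q] < ∞` for all coordinates `j` and `q ∈ [1, ∞)`, then for any
`κ ≥ 0` the function `ρ_q(w, κ) = P(|⟨w, X⟩| > κ ‖w‖_{L^q})` is lower semicontinuous, where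
`‖w‖_{L^q} = E[|⟨w, X⟩|^q]^{1/q}`. -/
theorem rho_q_lowerSemicontinuous
    {Ω : Type*} [MeasurableSpace Ω] (P : Measure Ω) [IsProbabilityMeasure P]
    {d : ℕ} (X : Ω → Fin d → ℝ) (hX : Measurable X)
    (q : ℝ) (hq : 1 ≤ q)
    (hmom : ∀ j : Fin d, Integrable (fun ω => |X ω j| ^ q) P)
    (κ : ℝ) (hκ : 0 ≤ κ) :
    LowerSemicontinuous
      (fun w : Fin d → ℝ =>
        (P {ω | |∑ j, w j * X ω j| >
            κ * (∫ ω, |∑ j, w j * X ω j| ^ q ∂P) ^ (1 / q)}).toReal) := by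
  have hq0 : (0 : ℝ) < q := lt_of_lt_of_le one_pos hq
  set g : (Fin d → ℝ) → Ω → ℝ := fun w ω => |∑ j, w j * X ω j| with hg
  have hXj : ∀ j : Fin d, Measurable fun ω => X ω j := fun j =>
    (measurable_pi_apply j).comp hX
  have hgm : ∀ w, Measurable (g w) := by
    intro w
    exact (Finset.measurable_sum Finset.univ fun j _ =>
      (hXj j).const_mul (w j)).abs
  -- continuity of the q-th moment integral in w
  have hIcont : Continuous fun w => ∫ ω, g w ω ^ q ∂P := by
    rw [continuous_iff_continuousAt]
    intro w
    set R := (∑ j, |w j|) + 1 with hR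
    have hR1 : (1 : ℝ) ≤ R := by
      have : 0 ≤ ∑ j, |w j| := Finset.sum_nonneg fun j _ => abs_nonneg _
      simp only [hR]; linarith
    have hRev : ∀ᶠ w' in nhds w, ∀ j, |w' j| ≤ R := by
      rw [Filter.eventually_all]
      intro j
      have hc : Continuous fun w' : Fin d → ℝ => |w' j| := (continuous_apply j).abs
      have hlt : |w j| < R := by
        have : |w j| ≤ ∑ j', |w j'| :=
          Finset.single_le_sum (f := fun j' => |w j'|) (fun j' _ => abs_nonneg _)
            (Finset.mem_univ j)
        simp only [hR]; linarith
      exact ((hc.tendsto w).eventually (eventually_lt_nhds hlt)).mono fun w' h => h.le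
    apply continuousAt_of_dominated
      (bound := fun ω => R ^ q * ((d : ℝ) ^ q * ∑ j, |X ω j| ^ q))
    · exact Filter.Eventually.of_forall fun w' =>
        (Measurable.aestronglyMeasurable (by measurability :
          Measurable fun ω => g w' ω ^ q))
    · filter_upwards [hRev] with w' hw'
      apply ae_of_all
      intro ω
      have h0 : 0 ≤ g w' ω ^ q := Real.rpow_nonneg (abs_nonneg _) q
      rw [Real.norm_of_nonneg h0]
      have hstep : g w' ω ≤ R * ∑ j, |X ω j| := by
        calc g w' ω ≤ ∑ j, |w' j * X ω j| := Finset.abs_sum_le_sum_abs _ _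
          _ = ∑ j, |w' j| * |X ω j| := by simp [abs_mul]
          _ ≤ ∑ j, R * |X ω j| :=
              Finset.sum_le_sum fun j _ =>
                mul_le_mul_of_nonneg_right (hw' j) (abs_nonneg _)
          _ = R * ∑ j, |X ω j| := by rw [Finset.mul_sum]
      calc g w' ω ^ q ≤ (R * ∑ j, |X ω j|) ^ q :=
            Real.rpow_le_rpow (abs_nonneg _) hstep hq0.le
        _ = R ^ q * (∑ j, |X ω j|) ^ q :=
            Real.mul_rpow (by linarith) (Finset.sum_nonneg fun j _ => abs_nonneg _)
        _ ≤ R ^ q * ((d : ℝ) ^ q * ∑ j, |X ω j| ^ q) := by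
            apply mul_le_mul_of_nonneg_left _ (by positivity)
            exact sum_rpow_le hq0 _ fun j => abs_nonneg _
    · exact ((integrable_finset_sum Finset.univ fun j _ => hmom j).const_mul
        ((d : ℝ) ^ q)).const_mul (R ^ q)
    · apply ae_of_all
      intro ω
      have hbase : Continuous fun w' : Fin d → ℝ => |∑ j, w' j * X ω j| :=
        (continuous_finset_sum Finset.univ fun j _ =>
          (continuous_apply j).mul continuous_const).abs
      exact (Real.continuousAt_rpow_const _ q (Or.inr hq0.le)).comp hbase.continuousAt
  set N : (Fin d → ℝ) → ℝ := fun w => (∫ ω, g w ω ^ q ∂P) ^ (1 / q) with hN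
  have hNcont : Continuous N := by
    rw [continuous_iff_continuousAt]
    intro w
    exact (Real.continuousAt_rpow_const _ (1 / q) (Or.inr (by positivity))).comp
      hIcont.continuousAt
  intro w y hy
  -- approximating sets
  set B : ℕ → Set Ω := fun n =>
    {ω | κ * N w + 1 / (n + 1) ≤ g w ω ∧ ∀ j, |X ω j| ≤ n} with hB
  have hBmono : Monotone B := by
    intro n m hnm ω hω
    have hc : (n : ℝ) ≤ m := by exact_mod_cast hnm
    refine ⟨le_trans (by gcongr) hω.1, fun j => le_trans (hω.2 j) hc⟩
  have hBU : (⋃ n, B n) = {ω | g w ω > κ * N w} := by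
    ext ω
    simp only [Set.mem_iUnion, Set.mem_setOf_eq, hB]
    constructor
    · rintro ⟨n, h1, -⟩
      have : (0 : ℝ) < 1 / (n + 1) := by positivity
      linarith
    · intro hgt
      obtain ⟨n₁, hn₁⟩ := exists_nat_one_div_lt (sub_pos.mpr hgt)
      obtain ⟨n₂, hn₂⟩ := exists_nat_ge (∑ j, |X ω j|)
      refine ⟨max n₁ n₂, ?_, ?_⟩
      · have h1 : (1 : ℝ) / (max n₁ n₂ + 1) ≤ 1 / (n₁ + 1) := by
          gcongr
          exact_mod_cast le_max_left n₁ n₂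
        linarith
      · intro j
        have h1 : |X ω j| ≤ ∑ j', |X ω j'| :=
          Finset.single_le_sum (f := fun j' => |X ω j'|) (fun j' _ => abs_nonneg _)
            (Finset.mem_univ j)
        have h2 : (n₂ : ℝ) ≤ max n₁ n₂ := by exact_mod_cast le_max_right n₁ n₂
        linarith
  have hAU : {ω | g w ω > κ * N w} = ⋃ n, B n := hBU.symm
  -- choose n with y < P (B n)
  have htendB : Filter.Tendsto (fun n => (P (B n)).toReal) Filter.atTop
      (nhds ((P {ω | g w ω > κ * N w}).toReal)) := by
    rw [hAU]
    exact (ENNReal.tendsto_toReal (measure_ne_top P _)).comp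
      (tendsto_measure_iUnion_atTop hBmono)
  have hy' : y < (P {ω | g w ω > κ * N w}).toReal := hy
  obtain ⟨n, hn⟩ := (htendB.eventually (eventually_gt_nhds hy')).exists
  -- neighborhood conditions
  have hE1 : ∀ᶠ w' in nhds w, κ * N w' < κ * N w + 1 / (2 * (n + 1)) := by
    have hc : Continuous fun w' => κ * N w' := continuous_const.mul hNcont
    have : κ * N w < κ * N w + 1 / (2 * (n + 1)) := by
      have : (0:ℝ) < 1 / (2 * ((n:ℝ) + 1)) := by positivity
      linarith
    exact (hc.tendsto w).eventually (eventually_lt_nhds this)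
  have hE2 : ∀ᶠ w' in nhds w, (∑ j, |w' j - w j|) * n < 1 / (2 * (n + 1)) := by
    have hc : Continuous fun w' : Fin d → ℝ => (∑ j, |w' j - w j|) * n :=
      (continuous_finset_sum Finset.univ fun j _ =>
        ((continuous_apply j).sub continuous_const).abs).mul continuous_const
    have hval : (∑ j, |w j - w j|) * (n : ℝ) = 0 := by simp
    have : (0:ℝ) < 1 / (2 * ((n:ℝ) + 1)) := by positivity
    have := (hc.tendsto w).eventually (eventually_lt_nhds (by rw [hval]; exact this))
    exact this
  filter_upwards [hE1, hE2] with w' h1 h2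
  have hsub : B n ⊆ {ω | g w' ω > κ * N w'} := by
    intro ω hω
    obtain ⟨hg1, hg2⟩ := hω
    have hdiff : g w ω ≤ g w' ω + (∑ j, |w' j - w j|) * n := by
      have key : g w ω ≤ g w' ω + ∑ j, |(w j - w' j) * X ω j| := by
        have : (∑ j, w j * X ω j) = (∑ j, w' j * X ω j) + ∑ j, (w j - w' j) * X ω j := by
          rw [← Finset.sum_add_distrib]
          congr 1; ext j; ring
        calc g w ω = |(∑ j, w' j * X ω j) + ∑ j, (w j - w' j) * X ω j| := by
              show |∑ j, w j * X ω j| = _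
              rw [this]
          _ ≤ |∑ j, w' j * X ω j| + |∑ j, (w j - w' j) * X ω j| := abs_add_le _ _
          _ ≤ g w' ω + ∑ j, |(w j - w' j) * X ω j| := by
              gcongr
              exact Finset.abs_sum_le_sum_abs _ _
      have key2 : ∑ j, |(w j - w' j) * X ω j| ≤ (∑ j, |w' j - w j|) * n := by
        rw [Finset.sum_mul]
        apply Finset.sum_le_sum
        intro j _
        rw [abs_mul, abs_sub_comm]
        exact mul_le_mul_of_nonneg_left (hg2 j) (abs_nonneg _)
      linarith
    show g w' ω > κ * N w'
    have : κ * N w + 1 / (n + 1) ≤ g w' ω + (∑ j, |w' j - w j|) * n := le_trans hg1 hdiff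
    have hne : ((n:ℝ) + 1) ≠ 0 := by positivity
    have hhalf : 1 / (2 * ((n:ℝ) + 1)) + 1 / (2 * ((n:ℝ) + 1)) = 1 / ((n:ℝ) + 1) := by
      field_simp
      norm_num
    nlinarith [h2, h1]
  calc y < (P (B n)).toReal := hn
    _ ≤ (P {ω | g w' ω > κ * N w'}).toReal :=
        ENNReal.toReal_mono (measure_ne_top P _) (measure_mono hsub)
end

section
/- Let X be a random vector in ℝ^d whose support is not contained in any hyperplane through the origin, i.e. P(⟨w, X⟩ = 0) = 1 implies w = 0. Then ρ := sup_{w ∈ ℝ^d \ {0}} P(⟨w, X⟩ = 0) < 1. -/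
open MeasureTheory Filter Topology Metric

/-- If the support of `X` is not contained in any hyperplane through the origin
(i.e. `P(⟨w, X⟩ = 0) = 1` implies `w = 0`), then
`ρ := sup_{w ≠ 0} P(⟨w, X⟩ = 0) < 1`. -/
theorem rho_lt_one
    {Ω : Type*} [MeasurableSpace Ω] (P : Measure Ω) [IsProbabilityMeasure P]
    {d : ℕ} (X : Ω → Fin d → ℝ) (hX : Measurable X)
    (hnondeg : ∀ w : Fin d → ℝ, P {ω | ∑ j, w j * X ω j = 0} = 1 → w = 0) :
    (⨆ w : {w : Fin d → ℝ // w ≠ 0}, (P {ω | ∑ j, (w : Fin d → ℝ) j * X ω j = 0}).toReal) < 1 := by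
  classical
  set f : (Fin d → ℝ) → ENNReal := fun w => P {ω | ∑ j, w j * X ω j = 0} with hf
  have hAmeas : ∀ w : Fin d → ℝ, MeasurableSet {ω | ∑ j, w j * X ω j = 0} := by
    intro w
    have : Measurable fun ω => ∑ j, w j * X ω j := by
      apply Finset.measurable_sum
      intro j _
      exact (measurable_const.mul ((measurable_pi_apply j).comp hX))
    exact this (measurableSet_singleton 0)
  by_cases hne : Nonempty {w : Fin d → ℝ // w ≠ 0}
  · -- scaling invariance
    have hscale : ∀ (c : ℝ), c ≠ 0 → ∀ w : Fin d → ℝ, f (c • w) = f w := by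
      intro c hc w
      apply congrArg P
      ext ω
      simp only [Set.mem_setOf_eq, Pi.smul_apply, smul_eq_mul, mul_assoc, ← Finset.mul_sum]
      rw [mul_eq_zero]
      simp [hc]
    -- the sphere is nonempty
    obtain ⟨⟨w₁, hw₁⟩⟩ := hne
    have hsph_ne : (f '' sphere (0 : Fin d → ℝ) 1).Nonempty := by
      refine ⟨f ((‖w₁‖⁻¹ : ℝ) • w₁), Set.mem_image_of_mem _ ?_⟩
      simp [norm_smul, norm_ne_zero_iff.mpr hw₁,
        inv_mul_cancel₀ (norm_ne_zero_iff.mpr hw₁)]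
    set S : Set ENNReal := f '' sphere (0 : Fin d → ℝ) 1 with hS
    set s : ENNReal := sSup S with hs
    -- sequence achieving the sup
    obtain ⟨u, hu_mono, hu_tendsto, hu_mem⟩ :=
      exists_seq_tendsto_sSup hsph_ne (OrderTop.bddAbove S)
    choose v hv_sph hv_eq using fun n => hu_mem n
    -- compactness: convergent subsequence
    obtain ⟨w₀, hw₀_sph, φ, hφ_mono, hφ_tendsto⟩ :=
      (isCompact_sphere (0 : Fin d → ℝ) 1).tendsto_subseq hv_sph
    -- the decreasing unions
    set B : ℕ → Set Ω := fun n => ⋃ k ≥ n, {ω | ∑ j, v (φ k) j * X ω j = 0} with hB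
    have hB_anti : Antitone B := by
      intro m n hmn
      exact Set.biUnion_subset_biUnion_left fun k hk => le_trans hmn hk
    have hB_meas : ∀ n, NullMeasurableSet (B n) P := fun n =>
      (MeasurableSet.biUnion (Set.to_countable _) fun k _ => hAmeas _).nullMeasurableSet
    have hPB : ∀ n, s ≤ P (B n) := by
      intro n
      refine le_of_tendsto (hu_tendsto.comp hφ_mono.tendsto_atTop) ?_
      filter_upwards [eventually_ge_atTop n] with k hk
      calc u (φ k) = f (v (φ k)) := (hv_eq (φ k)).symm
        _ ≤ P (B n) := by
            apply measure_mono
            intro ω hω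
            exact Set.mem_biUnion hk hω
    have hC_meas := Antitone.measure_iInter hB_anti hB_meas ⟨0, measure_ne_top P _⟩
    have hPC : s ≤ P (⋂ n, B n) := by
      rw [hC_meas]
      exact le_iInf hPB
    -- the intersection is contained in the hyperplane for w₀
    have hsub : (⋂ n, B n) ⊆ {ω | ∑ j, w₀ j * X ω j = 0} := by
      intro ω hω
      have hfreq : ∃ᶠ k in atTop, (fun w : Fin d → ℝ => ∑ j, w j * X ω j) (v (φ k)) ∈ ({0} : Set ℝ) := by
        rw [frequently_atTop]
        intro n
        have := Set.mem_iInter.mp hω n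
        obtain ⟨k, hk, hk'⟩ := Set.mem_iUnion₂.mp this
        exact ⟨k, hk, hk'⟩
      have hcont : Continuous fun w : Fin d → ℝ => ∑ j, w j * X ω j :=
        continuous_finset_sum _ fun j _ => (continuous_apply j).mul continuous_const
      have htend : Tendsto (fun k => (fun w : Fin d → ℝ => ∑ j, w j * X ω j) (v (φ k))) atTop
          (𝓝 (∑ j, w₀ j * X ω j)) := (hcont.tendsto w₀).comp hφ_tendsto
      have := mem_closure_of_frequently_of_tendsto hfreq htend
      simpa using this
    have hfw₀ : s ≤ f w₀ := le_trans hPC (measure_mono hsub)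
    have hw₀_ne : w₀ ≠ 0 := by
      intro h
      rw [h] at hw₀_sph
      simp at hw₀_sph
    have hfw₀_lt : f w₀ < 1 := by
      rcases lt_or_eq_of_le (prob_le_one (μ := P) (s := {ω | ∑ j, w₀ j * X ω j = 0})) with h | h
      · exact h
      · exact absurd (hnondeg w₀ h) hw₀_ne
    have hs_lt : s < 1 := lt_of_le_of_lt hfw₀ hfw₀_lt
    -- every f w, w ≠ 0, is ≤ s
    have hle : ∀ w : {w : Fin d → ℝ // w ≠ 0}, f (w : Fin d → ℝ) ≤ s := by
      rintro ⟨w, hw⟩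
      have hnorm : ‖w‖ ≠ 0 := norm_ne_zero_iff.mpr hw
      have : f w = f ((‖w‖⁻¹ : ℝ) • w) := (hscale _ (inv_ne_zero hnorm) w).symm
      rw [this]
      apply le_sSup
      exact Set.mem_image_of_mem _ (by simp [norm_smul, inv_mul_cancel₀ hnorm])
    have hs_ne_top : s ≠ ⊤ := ne_top_of_lt hs_lt
    have hfin : (⨆ w : {w : Fin d → ℝ // w ≠ 0},
        (P {ω | ∑ j, (w : Fin d → ℝ) j * X ω j = 0}).toReal) ≤ s.toReal :=
      Real.iSup_le (fun w => ENNReal.toReal_mono hs_ne_top (hle w)) ENNReal.toReal_nonneg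
    have hlt : s.toReal < 1 := by
      rw [← ENNReal.toReal_one]
      exact (ENNReal.toReal_lt_toReal hs_ne_top ENNReal.one_ne_top).mpr hs_lt
    exact lt_of_le_of_lt hfin hlt
  · haveI := not_nonempty_iff.mp hne
    rw [iSup, Set.range_eq_empty, Real.sSup_empty]
    exact one_pos
end

section
/- Let (X, Y) be a random pair in ℝ^d × ℝ such that Y = ⟨w*, X⟩ almost surely for some w* ∈ ℝ^d, and such that P(⟨w, X⟩ = 0) = 1 only if w = 0. Let ρ = sup_{w ∈ ℝ^d \ {0}} P(⟨w, X⟩ = 0) and let (X_i, Y_i)_{i=1}^n be n ≥ d i.i.d. copies of (X, Y). Then for every p ∈ (1, ∞) and every empirical risk minimizer ŵ_p, P(ŵ_p ≠ w*) ≤ C(n, d−1) · ρ^{n−d+1}, where C(n, d−1) is the binomial coefficient n choose d−1. -/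
/-!
On the event that every sample is realizable, `Y_i = ⟨w*, X_i⟩`, the true parameter has zero
empirical risk, hence so does `ŵ_p`, and `⟨ŵ_p - w*, X_i⟩ = 0` for all `i`. So `ŵ_p ≠ w*` forces
all `X_i` into a hyperplane. Their span then has dimension at most `d - 1` and is spanned by some
`d - 1` of them, `X_S`; the remaining `n - d + 1` samples lie in a hyperplane determined by `X_S`
alone. Conditioning on `X_S`, independence bounds this by `ρ ^ (n - d + 1)`, and a union bound
over the `n.choose (d - 1)` choices of `S` finishes.
-/

open MeasureTheory ProbabilityTheory Finset Module InnerProductSpace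
open scoped RealInnerProductSpace ENNReal

theorem exists_finset_card_eq_range_subset_span {K V ι : Type*} [Field K] [AddCommGroup V]
    [Module K V] [Fintype ι] {x : ι → V} {k : ℕ}
    (hx : finrank K (Submodule.span K (Set.range x)) ≤ k) (hk : k ≤ Fintype.card ι) :
    ∃ S : Finset ι, S.card = k ∧ Set.range x ⊆ Submodule.span K (x '' S) := by
  classical
  obtain ⟨b, -, -, hspan, hli⟩ :=
    exists_linearIndepOn_extension (linearIndepOn_empty K x) (Set.empty_subset Set.univ)
  have hb : b.toFinset.card ≤ k := by
    have := FiniteDimensional.span_of_finite K (Set.finite_range x)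
    rw [Set.toFinset_card, linearIndependent_iff_card_eq_finrank_span.1 hli]
    refine le_trans (Submodule.finrank_mono (Submodule.span_mono ?_)) hx
    exact Set.range_comp_subset_range _ _
  obtain ⟨S, hbS, -, hS⟩ :=
    Finset.exists_subsuperset_card_eq (subset_univ b.toFinset) hb (by simpa using hk)
  refine ⟨S, hS, ?_⟩
  rw [← Set.image_univ]
  exact hspan.trans (Submodule.span_mono (Set.image_mono (by simpa using hbS)))

section InnerProductSpace

variable {E : Type*} [NormedAddCommGroup E] [InnerProductSpace ℝ E]

theorem measurable_gramSchmidt [MeasurableSpace E] [BorelSpace E] [SecondCountableTopology E]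
    {α ι : Type*} [MeasurableSpace α] [LinearOrder ι] [LocallyFiniteOrderBot ι] [WellFoundedLT ι]
    {v : α → ι → E} (hv : ∀ i, Measurable fun a => v a i) (i : ι) :
    Measurable fun a => gramSchmidt ℝ (v a) i := by
  induction i using WellFoundedLT.induction with
  | _ i ih =>
  have h a : gramSchmidt ℝ (v a) i = v a i - ∑ k ∈ Iio i,
      (⟪gramSchmidt ℝ (v a) k, v a i⟫ / ‖gramSchmidt ℝ (v a) k‖ ^ 2) • gramSchmidt ℝ (v a) k :=
    eq_sub_of_add_eq (gramSchmidt_def'' ℝ (v a) i).symm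
  simp_rw [h]
  refine (hv i).sub (Finset.measurable_sum _ fun k hk => ?_)
  have hk := ih k (mem_Iio.1 hk)
  exact ((hk.inner (hv i)).div (hk.norm.pow_const 2)).smul hk

variable [FiniteDimensional ℝ E]

/-- Gram–Schmidt applied to `a` followed by a basis of `E`: the vectors produced after `a` are
orthogonal to `a`, and they are not all zero as soon as `a` cannot span `E`. Summing them
gives a measurable choice of a normal vector. -/
noncomputable def normalVector {ι : Type*} [Fintype ι] (a : ι → E) : E :=
  ∑ k : Fin (finrank ℝ E),
    gramSchmidt ℝ (Fin.append (a ∘ (Fintype.equivFin ι).symm) (finBasis ℝ E)) (Fin.natAdd _ k)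

theorem inner_normalVector_eq_zero {ι : Type*} [Fintype ι] (a : ι → E) (j : ι) :
    ⟪normalVector a, a j⟫ = 0 := by
  rw [normalVector, sum_inner]
  refine Finset.sum_eq_zero fun k _ => ?_
  have hlt : Fin.castAdd (finrank ℝ E) (Fintype.equivFin ι j) < Fin.natAdd _ k := by
    simp only [Fin.lt_def, Fin.val_castAdd, Fin.val_natAdd]
    omega
  simpa using gramSchmidt_inv_triangular ℝ
    (Fin.append (a ∘ (Fintype.equivFin ι).symm) (finBasis ℝ E)) hlt

theorem normalVector_ne_zero {ι : Type*} [Fintype ι] (a : ι → E)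
    (ha : Fintype.card ι < finrank ℝ E) : normalVector a ≠ 0 := by
  set v := Fin.append (a ∘ (Fintype.equivFin ι).symm) (finBasis ℝ E)
  set g := gramSchmidt ℝ v
  intro h
  have hg k : g (Fin.natAdd _ k) = 0 := by
    have : ⟪g (Fin.natAdd _ k), normalVector a⟫ = ‖g (Fin.natAdd _ k)‖ ^ 2 := by
      rw [normalVector, inner_sum, Finset.sum_eq_single k]
      · exact real_inner_self_eq_norm_sq _
      · exact fun l _ hl => gramSchmidt_orthogonal ℝ v (by simpa using hl.symm)
      · simp
    rw [h, inner_zero_right] at this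
    exact norm_eq_zero.1 (pow_eq_zero_iff two_ne_zero |>.1 this.symm)
  have hrange : Set.range g ⊆ insert 0 (Set.range (g ∘ Fin.castAdd _)) := by
    rintro _ ⟨i, rfl⟩
    induction i using Fin.addCases with
    | left j => exact Or.inr ⟨j, rfl⟩
    | right k => exact Or.inl (hg k)
  have htop : Submodule.span ℝ (Set.range g) = ⊤ := by
    rw [span_gramSchmidt, eq_top_iff, ← (finBasis ℝ E).span_eq]
    refine Submodule.span_mono ?_
    rintro _ ⟨k, rfl⟩
    exact ⟨Fin.natAdd _ k, Fin.append_right _ _ k⟩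
  have := finrank_le_of_span_eq_top (R := ℝ) (v := g ∘ Fin.castAdd (finrank ℝ E)) <| by
    rw [eq_top_iff, ← htop]
    exact (Submodule.span_mono hrange).trans Submodule.span_insert_zero.le
  simp only [Fintype.card_fin] at this
  omega

theorem exists_finset_card_eq_forall_inner_normalVector_eq_zero {ι : Type*} [Fintype ι]
    {x : ι → E} {v : E} (hv : v ≠ 0) (hx : ∀ i, ⟪v, x i⟫ = 0)
    (hd : finrank ℝ E ≤ Fintype.card ι + 1) :
    ∃ S : Finset ι, S.card = finrank ℝ E - 1 ∧
      ∀ i, ⟪normalVector (fun j : S => x j), x i⟫ = 0 := by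
  have hspan : Submodule.span ℝ (Set.range x) ≤ (ℝ ∙ v)ᗮ := Submodule.span_le.2 <| by
    rintro _ ⟨i, rfl⟩
    exact Submodule.mem_orthogonal_singleton_iff_inner_right.2 (hx i)
  have hrank : finrank ℝ (Submodule.span ℝ (Set.range x)) ≤ finrank ℝ E - 1 := by
    have h := (ℝ ∙ v).finrank_add_finrank_orthogonal
    rw [finrank_span_singleton hv] at h
    have := Submodule.finrank_mono hspan
    omega
  obtain ⟨S, hS, hxS⟩ := exists_finset_card_eq_range_subset_span hrank (by omega)
  refine ⟨S, hS, fun i => Submodule.mem_orthogonal_singleton_iff_inner_right.1 ?_⟩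
  refine Submodule.span_le.2 ?_ (hxS ⟨i, rfl⟩)
  rintro _ ⟨j, hj, rfl⟩
  exact Submodule.mem_orthogonal_singleton_iff_inner_right.2
    (inner_normalVector_eq_zero (fun j : S => x j) ⟨j, hj⟩)

variable [MeasurableSpace E] [BorelSpace E]

theorem measurable_normalVector {ι : Type*} [Fintype ι] :
    Measurable (normalVector : (ι → E) → E) := by
  refine Finset.measurable_sum _ fun k _ => measurable_gramSchmidt (fun i => ?_) _
  induction i using Fin.addCases with
  | left j => simpa only [Fin.append_left, Function.comp_apply] using measurable_pi_apply _
  | right k => simpa only [Fin.append_right] using measurable_const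

variable (μ : Measure E) [IsProbabilityMeasure μ] {r : ℝ≥0∞}

theorem measure_prod_forall_inner_normalVector_eq_zero_le {κ ι : Type*} [Fintype κ] [Fintype ι]
    (hr : ∀ v ≠ 0, μ {y | ⟪v, y⟫ = 0} ≤ r) (hκ : Fintype.card κ < finrank ℝ E) :
    ((Measure.pi fun _ : κ => μ).prod (Measure.pi fun _ : ι => μ))
      {q | ∀ i, ⟪normalVector q.1, q.2 i⟫ = 0} ≤ r ^ Fintype.card ι := by
  have hmeas : MeasurableSet {q : (κ → E) × (ι → E) | ∀ i, ⟪normalVector q.1, q.2 i⟫ = 0} := by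
    simp only [Set.ofPred_forall]
    exact .iInter fun i => measurableSet_eq_fun
      ((measurable_normalVector.comp measurable_fst).inner
        ((measurable_pi_apply i).comp measurable_snd)) measurable_const
  rw [Measure.prod_apply hmeas]
  calc _ ≤ ∫⁻ _, r ^ Fintype.card ι ∂(Measure.pi fun _ : κ => μ) := lintegral_mono fun a => ?_
    _ = r ^ Fintype.card ι := by simp
  have hslice : Prod.mk a ⁻¹' {q : (κ → E) × (ι → E) | ∀ i, ⟪normalVector q.1, q.2 i⟫ = 0} =
      Set.univ.pi fun _ => {y | ⟪normalVector a, y⟫ = 0} := by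
    ext; simp
  rw [hslice, Measure.pi_pi]
  exact Finset.prod_le_pow_card _ _ _ fun _ _ => hr _ (normalVector_ne_zero a hκ)

theorem measure_pi_forall_inner_normalVector_eq_zero_le {ι : Type*} [Fintype ι] [DecidableEq ι]
    (hr : ∀ v ≠ 0, μ {y | ⟪v, y⟫ = 0} ≤ r) {S : Finset ι} (hS : S.card < finrank ℝ E) :
    Measure.pi (fun _ : ι => μ) {x | ∀ i : {i // i ∉ S}, ⟪normalVector (fun j : S => x j), x i⟫ = 0}
      ≤ r ^ (Fintype.card ι - S.card) := by
  have h := measure_prod_forall_inner_normalVector_eq_zero_le μ (κ := S) (ι := {i // i ∉ S}) hr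
    (by simpa using hS)
  rw [Fintype.card_subtype_compl, Fintype.card_coe] at h
  exact ((measurePreserving_piEquivPiSubtypeProd (fun _ : ι => μ) (· ∈ S)).measure_preimage_equiv
    _).trans_le (by convert h)

theorem measure_pi_exists_forall_inner_eq_zero_le {n : ℕ}
    (hr : ∀ v ≠ 0, μ {y | ⟪v, y⟫ = 0} ≤ r) (hn : finrank ℝ E ≤ n) :
    Measure.pi (fun _ : Fin n => μ) {x | ∃ v ≠ 0, ∀ i, ⟪v, x i⟫ = 0} ≤
      n.choose (finrank ℝ E - 1) * r ^ (n - finrank ℝ E + 1) := by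
  rcases (finrank ℝ E).eq_zero_or_pos with hE | hE
  · have : {x : Fin n → E | ∃ v ≠ 0, ∀ i, ⟪v, x i⟫ = 0} = ∅ :=
      Set.eq_empty_of_forall_notMem fun x ⟨v, hv, _⟩ => hv (finrank_zero_iff_forall_zero.1 hE v)
    rw [this, measure_empty]
    exact zero_le
  set C : Finset (Fin n) → Set (Fin n → E) := fun S =>
    {x | ∀ i : {i // i ∉ S}, ⟪normalVector (fun j : S => x j), x i⟫ = 0}
  have hcover : {x : Fin n → E | ∃ v ≠ 0, ∀ i, ⟪v, x i⟫ = 0} ⊆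
      ⋃ S ∈ powersetCard (finrank ℝ E - 1) univ, C S := by
    rintro x ⟨v, hv, hx⟩
    obtain ⟨S, hS, hxS⟩ := exists_finset_card_eq_forall_inner_normalVector_eq_zero hv hx
      (by simp only [Fintype.card_fin]; omega)
    exact Set.mem_biUnion (mem_powersetCard.2 ⟨subset_univ S, hS⟩) fun i => hxS i
  have hC : ∀ S ∈ powersetCard (finrank ℝ E - 1) univ,
      Measure.pi (fun _ : Fin n => μ) (C S) ≤ r ^ (n - finrank ℝ E + 1) := by
    intro S hS
    have hS := (mem_powersetCard.1 hS).2
    have h := measure_pi_forall_inner_normalVector_eq_zero_le μ hr (S := S) (by omega)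
    rwa [Fintype.card_fin, hS, show n - (finrank ℝ E - 1) = n - finrank ℝ E + 1 by omega] at h
  calc _ ≤ _ := measure_mono hcover
    _ ≤ _ := measure_biUnion_finset_le _ _
    _ ≤ _ := sum_le_sum hC
    _ = _ := by simp

end InnerProductSpace

section EmpiricalRisk

variable {n d : ℕ} (p : ℝ) (x : Fin n → Fin d → ℝ) (y : Fin n → ℝ)

noncomputable def empiricalRisk (w : Fin d → ℝ) : ℝ :=
  (1 / n : ℝ) * ∑ i, |w ⬝ᵥ x i - y i| ^ p / (p * (p - 1))

variable {p x y}

theorem empiricalRisk_eq_zero {w : Fin d → ℝ} (hp : p ≠ 0) (hw : ∀ i, y i = w ⬝ᵥ x i) :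
    empiricalRisk p x y w = 0 := by
  simp [empiricalRisk, hw, Real.zero_rpow hp]

theorem dotProduct_eq_of_empiricalRisk_nonpos (hp : 1 < p) {w : Fin d → ℝ}
    (hw : empiricalRisk p x y w ≤ 0) (i : Fin n) : w ⬝ᵥ x i = y i := by
  have hn : (0 : ℝ) < 1 / n := by
    have : 0 < n := i.pos
    positivity
  have hterm : ∀ k ∈ univ, 0 ≤ |w ⬝ᵥ x k - y k| ^ p / (p * (p - 1)) := fun k _ => by
    have := sub_pos.2 hp
    positivity
  have hsum := (sum_eq_zero_iff_of_nonneg hterm).1 <| le_antisymm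
    (nonpos_of_mul_nonpos_right hw hn) (sum_nonneg hterm)
  have hi := hsum i (mem_univ i)
  rw [div_eq_zero_iff, Real.rpow_eq_zero (abs_nonneg _) (by linarith), abs_eq_zero,
    sub_eq_zero] at hi
  exact hi.resolve_right (by nlinarith)

theorem sub_dotProduct_eq_zero_of_empiricalRisk_le (hp : 1 < p) {w₀ ŵ : Fin d → ℝ}
    (h₀ : ∀ i, y i = w₀ ⬝ᵥ x i) (hŵ : empiricalRisk p x y ŵ ≤ empiricalRisk p x y w₀)
    (i : Fin n) : (ŵ - w₀) ⬝ᵥ x i = 0 := by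
  have hŵ₀ := hŵ.trans (empiricalRisk_eq_zero (by linarith) h₀).le
  rw [sub_dotProduct, dotProduct_eq_of_empiricalRisk_nonpos hp hŵ₀, h₀, sub_self]

end EmpiricalRisk

theorem measure_le_ofReal_iSup_toReal {Ω ι : Type*} [MeasurableSpace Ω] (P : Measure Ω)
    [IsFiniteMeasure P] (s : ι → Set Ω) (i : ι) :
    P (s i) ≤ ENNReal.ofReal (⨆ j, (P (s j)).toReal) := by
  rw [← ENNReal.ofReal_toReal (measure_ne_top P (s i))]
  refine ENNReal.ofReal_le_ofReal
    (le_ciSup (f := fun j => (P (s j)).toReal) ⟨(P Set.univ).toReal, ?_⟩ i)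
  rintro _ ⟨j, rfl⟩
  exact ENNReal.toReal_mono (measure_ne_top _ _) (measure_mono (Set.subset_univ _))

theorem real_inner_toLp_toLp {d : ℕ} (v x : Fin d → ℝ) :
    ⟪WithLp.toLp 2 v, WithLp.toLp 2 x⟫ = v ⬝ᵥ x :=
  (EuclideanSpace.inner_toLp_toLp v x).trans (dotProduct_comm _ _)

theorem measure_map_toLp_inner_eq_zero_le {Ω : Type*} [MeasurableSpace Ω] (P : Measure Ω)
    [IsFiniteMeasure P] {d : ℕ} {X : Ω → Fin d → ℝ} (hX : Measurable X)
    {v : EuclideanSpace ℝ (Fin d)} (hv : v ≠ 0) :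
    P.map (fun ω => WithLp.toLp 2 (X ω)) {y | ⟪v, y⟫ = 0} ≤
      ENNReal.ofReal (⨆ w : {w : Fin d → ℝ // w ≠ 0}, (P {ω | ∑ j, w.1 j * X ω j = 0}).toReal) := by
  rw [Measure.map_apply (by fun_prop) (measurableSet_eq_fun (by fun_prop) measurable_const)]
  have hpre : (fun ω => WithLp.toLp 2 (X ω)) ⁻¹' {y | ⟪v, y⟫ = 0} =
      {ω | ∑ j, WithLp.ofLp v j * X ω j = 0} :=
    Set.ext fun ω => Iff.of_eq (congrArg (· = 0) (real_inner_toLp_toLp _ _))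
  exact hpre ▸ measure_le_ofReal_iSup_toReal P
    (fun w : {w : Fin d → ℝ // w ≠ 0} => {ω | ∑ j, w.1 j * X ω j = 0})
    ⟨WithLp.ofLp v, by simpa using hv⟩

theorem ProbabilityTheory.iIndepFun.map_fun_eq_pi_of_identDistrib {Ω β ι : Type*}
    [MeasurableSpace Ω] [MeasurableSpace β] [Fintype ι] {P : Measure Ω} [IsProbabilityMeasure P]
    {Z : ι → Ω → β} {X : Ω → β} (hindep : iIndepFun Z P)
    (hident : ∀ i, IdentDistrib (Z i) X P P) :
    P.map (fun ω i => Z i ω) = Measure.pi fun _ => P.map X := by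
  rw [(iIndepFun_iff_map_fun_eq_pi_map fun i => (hident i).aemeasurable_fst).1 hindep]
  congr with i : 1
  exact (hident i).map_eq

theorem realizable_exact_recovery_general
    {Ω : Type*} [MeasurableSpace Ω] (P : Measure Ω) [IsProbabilityMeasure P]
    {d n : ℕ} (hnd : n ≥ d)
    (X : Ω → Fin d → ℝ) (Y : Ω → ℝ) (hX : Measurable X)
    (wstar : Fin d → ℝ) (hreal : ∀ᵐ ω ∂P, Y ω = ∑ j, wstar j * X ω j)
    (ρ : ℝ)
    (hρ : ρ = ⨆ w : {w : Fin d → ℝ // w ≠ 0},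
      (P {ω | ∑ j, w.1 j * X ω j = 0}).toReal)
    -- i.i.d. samples distributed as (X, Y)
    (XY : Fin n → Ω → (Fin d → ℝ) × ℝ)
    (hindep : iIndepFun XY P)
    (hident : ∀ i, IdentDistrib (XY i) (fun ω => (X ω, Y ω)) P P)
    (p : ℝ) (hp : 1 < p)
    -- empirical risk minimizer for the p-th power loss
    (what : Ω → Fin d → ℝ)
    (hERM : ∀ ω, ∀ w : Fin d → ℝ,
      (1 / n : ℝ) * ∑ i, |∑ j, what ω j * (XY i ω).1 j - (XY i ω).2| ^ p / (p * (p - 1)) ≤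
      (1 / n : ℝ) * ∑ i, |∑ j, w j * (XY i ω).1 j - (XY i ω).2| ^ p / (p * (p - 1))) :
    P {ω | what ω ≠ wstar} ≤ ENNReal.ofReal ((n.choose (d - 1)) * ρ ^ (n - d + 1)) := by
  let toE : (Fin d → ℝ) → EuclideanSpace ℝ (Fin d) := WithLp.toLp 2
  have htoE : Measurable (toE ∘ Prod.fst : (Fin d → ℝ) × ℝ → _) := by fun_prop
  let Z : Fin n → Ω → EuclideanSpace ℝ (Fin d) := fun i => toE ∘ Prod.fst ∘ XY i
  have hlaw : P.map (fun ω i => Z i ω) = Measure.pi fun _ => P.map fun ω => toE (X ω) :=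
    (hindep.comp _ fun _ => htoE).map_fun_eq_pi_of_identDistrib fun i => (hident i).comp htoE
  have hgood : ∀ᵐ ω ∂P, ∀ i, (XY i ω).2 = wstar ⬝ᵥ (XY i ω).1 :=
    ae_all_iff.2 fun i => (hident i).symm.ae_snd (p := fun q => q.2 = wstar ⬝ᵥ q.1)
      (measurableSet_eq_fun measurable_snd (by fun_prop)) hreal
  have hbad : {ω | what ω ≠ wstar} ≤ᵐ[P]
      (fun ω i => Z i ω) ⁻¹' {x | ∃ v ≠ 0, ∀ i, ⟪v, x i⟫ = 0} := by
    filter_upwards [hgood] with ω hω (hne : what ω ≠ wstar)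
    refine ⟨toE (what ω - wstar), by simpa [toE, sub_eq_zero] using hne, fun i => ?_⟩
    exact (real_inner_toLp_toLp _ _).trans
      (sub_dotProduct_eq_zero_of_empiricalRisk_le hp hω (hERM ω wstar) i)
  have : IsProbabilityMeasure (P.map fun ω => toE (X ω)) :=
    Measure.isProbabilityMeasure_map (by fun_prop)
  have hρ0 : 0 ≤ ρ := hρ ▸ Real.iSup_nonneg fun _ => ENNReal.toReal_nonneg
  calc P {ω | what ω ≠ wstar}
      ≤ P.map (fun ω i => Z i ω) {x | ∃ v ≠ 0, ∀ i, ⟪v, x i⟫ = 0} :=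
        (measure_mono_ae hbad).trans <| Measure.le_map_apply
          (aemeasurable_pi_lambda _ fun i => htoE.comp_aemeasurable (hident i).aemeasurable_fst) _
    _ ≤ n.choose (d - 1) * ENNReal.ofReal ρ ^ (n - d + 1) := by
        have h := measure_pi_exists_forall_inner_eq_zero_le (n := n) _
          (fun v hv => hρ ▸ measure_map_toLp_inner_eq_zero_le P hX hv)
          (by rwa [finrank_euclideanSpace_fin])
        rw [hlaw]
        rwa [finrank_euclideanSpace_fin] at h
    _ = ENNReal.ofReal ((n.choose (d - 1)) * ρ ^ (n - d + 1)) := by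
        rw [ENNReal.ofReal_mul (Nat.cast_nonneg _), ENNReal.ofReal_pow hρ0, ENNReal.ofReal_natCast]

/-- realizable case (Theorem `thm:realizable`, first part): if `Y = ⟨w*, X⟩`
almost surely and `n ≥ d`, then any empirical risk minimizer `ŵ_p` for the `p`-th power loss
satisfies `P(ŵ_p ≠ w*) ≤ (n choose (d-1)) ρ^{n-d+1}`, where
`ρ = sup_{w ≠ 0} P(⟨w, X⟩ = 0)`. -/
theorem realizable_exact_recovery
    {Ω : Type*} [MeasurableSpace Ω] (P : Measure Ω) [IsProbabilityMeasure P]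
    {d n : ℕ} (hnd : n ≥ d)
    (X : Ω → Fin d → ℝ) (Y : Ω → ℝ) (hX : Measurable X) (hY : Measurable Y)
    (wstar : Fin d → ℝ) (hreal : ∀ᵐ ω ∂P, Y ω = ∑ j, wstar j * X ω j)
    (hnondeg : ∀ w : Fin d → ℝ, P {ω | ∑ j, w j * X ω j = 0} = 1 → w = 0)
    (ρ : ℝ)
    (hρ : ρ = ⨆ w : {w : Fin d → ℝ // w ≠ 0},
      (P {ω | ∑ j, w.1 j * X ω j = 0}).toReal)
    -- i.i.d. samples distributed as (X, Y)
    (XY : Fin n → Ω → (Fin d → ℝ) × ℝ)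
    (hmeas : ∀ i, Measurable (XY i))
    (hindep : iIndepFun XY P)
    (hident : ∀ i, IdentDistrib (XY i) (fun ω => (X ω, Y ω)) P P)
    (p : ℝ) (hp : 1 < p)
    -- empirical risk minimizer for the p-th power loss
    (what : Ω → Fin d → ℝ) (hwhat : Measurable what)
    (hERM : ∀ ω, ∀ w : Fin d → ℝ,
      (1 / n : ℝ) * ∑ i, |∑ j, what ω j * (XY i ω).1 j - (XY i ω).2| ^ p / (p * (p - 1)) ≤
      (1 / n : ℝ) * ∑ i, |∑ j, w j * (XY i ω).1 j - (XY i ω).2| ^ p / (p * (p - 1))) :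
    P {ω | what ω ≠ wstar} ≤ ENNReal.ofReal ((n.choose (d - 1)) * ρ ^ (n - d + 1)) :=
  realizable_exact_recovery_general P hnd X Y hX wstar hreal ρ hρ XY hindep hident p hp what hERM
end

section
/- Let p ∈ [2, ∞), n ∈ ℕ, and let (x_i, y_i)_{i=1}^n be any points in ℝ^d × ℝ. Then for all w, w₀ ∈ ℝ^d: (1/n) Σ_{i=1}^n [ℓ_p(⟨w, x_i⟩ − y_i) − ℓ_p(⟨w₀, x_i⟩ − y_i)] ≥ (1/(8(p−1))) · (1/n) Σ_{i=1}^n |⟨w₀, x_i⟩ − y_i|^{p−2} ⟨w − w₀, x_i⟩² + ⟨(1/n) Σ_{i=1}^n ℓ_p'(⟨w₀, x_i⟩ − y_i) x_i, w − w₀⟩. -/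
open Finset

/-! Both sides are averages over the sample, so it suffices to prove, for every pair of reals
`a, b`, the second-order lower bound
`ℓ_p(b) - ℓ_p(a) ≥ ℓ_p'(a) (b - a) + |a|^(p-2) (b - a)² / (8(p-1))`.
For `a ≠ 0` both sides scale like `|a|^p`, which reduces it to `a = 1`, that is, to
`|t|^p ≥ 1 + p(t-1) + (p/8)(t-1)²`; for `t ≥ 0` this follows (even with `p - 1` in place of
`p/8`) from Bernoulli's inequality `t^(p-1) ≥ 1 + (p-1)(t-1)` multiplied by `t`, and for `t < 0`
from the case `-t`. -/

noncomputable def lpLoss (p t : ℝ) : ℝ := |t| ^ p / (p * (p - 1))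

noncomputable def lpLossDeriv (p t : ℝ) : ℝ := Real.sign t * |t| ^ (p - 1) / (p - 1)

theorem Real.sign_mul_self (a : ℝ) : Real.sign a * a = |a| := by
  rcases lt_trichotomy a 0 with ha | rfl | ha
  · rw [Real.sign_of_neg ha, abs_of_neg ha]; ring
  · simp
  · rw [Real.sign_of_pos ha, abs_of_pos ha]; ring

section

variable {p : ℝ}

theorem one_add_mul_sub_one_add_sq_le_rpow (hp : 2 ≤ p) {t : ℝ} (ht : 0 ≤ t) :
    1 + p * (t - 1) + (p - 1) * (t - 1) ^ 2 ≤ t ^ p := by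
  have bernoulli : 1 + (p - 1) * (t - 1) ≤ t ^ (p - 1) := by
    simpa using one_add_mul_self_le_rpow_one_add (s := t - 1) (by linarith) (p := p - 1)
      (by linarith)
  have hpow : t ^ p = t * t ^ (p - 1) := by
    rw [← Real.rpow_one_add' ht (by linarith)]; ring_nf
  rw [hpow]
  nlinarith [mul_le_mul_of_nonneg_left bernoulli ht]

theorem one_add_mul_sub_one_add_sq_le_abs_rpow (hp : 2 ≤ p) (t : ℝ) :
    1 + p * (t - 1) + p / 8 * (t - 1) ^ 2 ≤ |t| ^ p := by
  rcases le_or_gt 0 t with ht | ht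
  · rw [abs_of_nonneg ht]
    nlinarith [one_add_mul_sub_one_add_sq_le_rpow hp ht, sq_nonneg (t - 1)]
  · rw [abs_of_neg ht]
    nlinarith [one_add_mul_sub_one_add_sq_le_rpow hp (neg_nonneg.mpr ht.le), sq_nonneg t]

theorem abs_rpow_add_sign_mul_add_sq_le_abs_rpow (hp : 2 ≤ p) (a b : ℝ) :
    |a| ^ p + p * Real.sign a * |a| ^ (p - 1) * (b - a) + p / 8 * |a| ^ (p - 2) * (b - a) ^ 2 ≤
      |b| ^ p := by
  rcases eq_or_ne a 0 with rfl | ha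
  · rw [Real.sign_zero, abs_zero, Real.zero_rpow (x := p) (by positivity)]
    rcases hp.eq_or_lt with rfl | hp
    · norm_num; nlinarith [sq_nonneg b]
    · rw [Real.zero_rpow (x := p - 2) (by linarith)]
      simpa using Real.rpow_nonneg (abs_nonneg b) p
  have habs : |a| ≠ 0 := abs_ne_zero.mpr ha
  have hpow : 0 < |a| ^ p := Real.rpow_pos_of_pos (abs_pos.mpr ha) p
  have hp1 : |a| ^ (p - 1) = |a| ^ p / |a| := Real.rpow_sub_one habs p
  have hp2 : |a| ^ (p - 2) = |a| ^ p / |a| ^ 2 := by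
    rw [Real.rpow_sub (abs_pos.mpr ha), Real.rpow_two]
  have hb : |b| ^ p = |a| ^ p * |b / a| ^ p := by
    rw [abs_div, Real.div_rpow (abs_nonneg b) (abs_nonneg a), mul_div_cancel₀ _ hpow.ne']
  have hsign : Real.sign a * |a| ^ (p - 1) = |a| ^ p / a := by
    rw [hp1, mul_div_assoc', div_eq_div_iff habs ha, mul_right_comm, Real.sign_mul_self,
      mul_comm]
  have scaled := mul_le_mul_of_nonneg_left
    (one_add_mul_sub_one_add_sq_le_abs_rpow hp (b / a)) hpow.le
  calc |a| ^ p + p * Real.sign a * |a| ^ (p - 1) * (b - a) + p / 8 * |a| ^ (p - 2) * (b - a) ^ 2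
      = |a| ^ p * (1 + p * (b / a - 1) + p / 8 * (b / a - 1) ^ 2) := by
        rw [mul_assoc p, hsign, hp2, sq_abs]
        field_simp
    _ ≤ |b| ^ p := hb ▸ scaled

theorem lpLoss_sub_lpLoss_ge (hp : 2 ≤ p) (a b : ℝ) :
    lpLoss p b - lpLoss p a ≥
      1 / (8 * (p - 1)) * (|a| ^ (p - 2) * (b - a) ^ 2) + lpLossDeriv p a * (b - a) := by
  have hp1 : 0 < p - 1 := by linarith
  have key := abs_rpow_add_sign_mul_add_sq_le_abs_rpow hp a b
  rw [ge_iff_le, lpLoss, lpLoss, lpLossDeriv, ← sub_div, le_div_iff₀ (by positivity)]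
  have expand : (1 / (8 * (p - 1)) * (|a| ^ (p - 2) * (b - a) ^ 2) +
      Real.sign a * |a| ^ (p - 1) / (p - 1) * (b - a)) * (p * (p - 1)) =
      p / 8 * |a| ^ (p - 2) * (b - a) ^ 2 + p * Real.sign a * |a| ^ (p - 1) * (b - a) := by
    field_simp
  linarith

theorem average_lpLoss_sub_lpLoss_ge {ι : Type*} [Fintype ι] (hp : 2 ≤ p) {c : ℝ} (hc : 0 ≤ c)
    (a b : ι → ℝ) :
    c * ∑ i, (lpLoss p (b i) - lpLoss p (a i)) ≥
      1 / (8 * (p - 1)) * (c * ∑ i, |a i| ^ (p - 2) * (b i - a i) ^ 2) +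
        c * ∑ i, lpLossDeriv p (a i) * (b i - a i) := by
  have h := mul_le_mul_of_nonneg_left
    (sum_le_sum (s := univ) fun i _ => lpLoss_sub_lpLoss_ge hp (a i) (b i)) hc
  rw [sum_add_distrib, ← mul_sum] at h
  linear_combination h

end

theorem sum_const_mul_sum_mul_comm {ι κ : Type*} [Fintype ι] [Fintype κ] (c : ℝ) (g : ι → ℝ)
    (x : ι → κ → ℝ) (v : κ → ℝ) :
    ∑ j, (c * ∑ i, g i * x i j) * v j = c * ∑ i, g i * ∑ j, v j * x i j := by
  simp only [mul_sum, sum_mul]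
  rw [sum_comm]
  exact sum_congr rfl fun _ _ => sum_congr rfl fun _ _ => by ring

/-- pointwise lower bound on the excess empirical risk for `p ∈ [2, ∞)`
(inequality `eq:lowerboundpgeq2` of Lemma `lem:boundsgeq2`). -/
theorem empirical_excess_risk_lower_bound_p_ge_two
    (p : ℝ) (hp : 2 ≤ p) {d n : ℕ}
    (x : Fin n → Fin d → ℝ) (y : Fin n → ℝ)
    (w w₀ : Fin d → ℝ) :
    (1 / n : ℝ) * ∑ i, (|∑ j, w j * x i j - y i| ^ p / (p * (p - 1)) -
        |∑ j, w₀ j * x i j - y i| ^ p / (p * (p - 1))) ≥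
      (1 / (8 * (p - 1))) *
        ((1 / n : ℝ) * ∑ i, |∑ j, w₀ j * x i j - y i| ^ (p - 2) *
          (∑ j, (w j - w₀ j) * x i j) ^ 2) +
      ∑ j, ((1 / n : ℝ) * ∑ i, (Real.sign (∑ j', w₀ j' * x i j' - y i) *
          |∑ j', w₀ j' * x i j' - y i| ^ (p - 1) / (p - 1)) * x i j) * (w j - w₀ j) := by
  have residual_sub : ∀ i, ∑ j, (w j - w₀ j) * x i j =
      (∑ j, w j * x i j - y i) - (∑ j, w₀ j * x i j - y i) := fun i => by
    simp only [sub_mul, sum_sub_distrib]; ring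
  rw [sum_const_mul_sum_mul_comm]
  simp only [residual_sub]
  exact average_lpLoss_sub_lpLoss_ge hp (by positivity) (fun i => ∑ j, w₀ j * x i j - y i)
    (fun i => ∑ j, w j * x i j - y i)
end

section
/- Let p ∈ [2, ∞) and let (X, Y) be a random pair in ℝ^d × ℝ with E[|Y|^p] < ∞ and E[|X^j|^p] < ∞ for all j ∈ {1,…,d}. Let w*_p be a minimizer of R_p and H_p = E[|⟨w*_p, X⟩ − Y|^{p−2} X Xᵀ]. Then for all w ∈ ℝ^d: R_p(w) − R_p(w*_p) ≤ (2p/(p−1)) (w − w*_p)ᵀ H_p (w − w*_p) + p^p E[|⟨w − w*_p, X⟩|^p]. -/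
/-!
Since `wstar` minimises the risk, `R(w) - R(wstar) ≤ R(w) + R(2 wstar - w) - 2 R(wstar)`, the
expectation of the second symmetric difference `|a + b|^p + |a - b|^p - 2|a|^p` of `|·|^p` at the
residual `a = ⟨wstar, X⟩ - Y` in the direction `b = ⟨w - wstar, X⟩`. Along `t ↦ a ± t b` the
second derivatives of `|·|^p` are `p(p-1)|a ± t b|^(p-2)`. If `(p-1)|t b| ≤ |a|`, one of them is
at most `e p(p-1)|a|^(p-2)` and the other at most `p(p-1)|a|^(p-2)`; otherwise both are at most
`p(p-1)(p|t b|)^(p-2)`. Integrating twice in `t` bounds the symmetric difference by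
`2p(p-1)|a|^(p-2) b^2 + 2p^(p-2)|b|^p`, and in expectation `E[|a|^(p-2) b^2]` is the quadratic
form of `Hp` at `w - wstar`.
-/

open MeasureTheory Matrix Real Set Filter Topology

lemma abs_rpow_sub_two_mul_sq {p : ℝ} (hp : p ≠ 0) (x : ℝ) :
    |x| ^ (p - 2) * x ^ 2 = |x| ^ p := by
  rw [← sq_abs, ← rpow_natCast, ← rpow_add' (abs_nonneg x) (by simpa using hp)]
  norm_num

lemma abs_rpow_sub_two_mul_sq_le {p : ℝ} (hp : 2 ≤ p) (x y : ℝ) :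
    |x| ^ (p - 2) * y ^ 2 ≤ |x| ^ p + |y| ^ p := by
  have hp0 : p ≠ 0 := by linarith
  have hxp := rpow_nonneg (abs_nonneg x) p
  have hyp := rpow_nonneg (abs_nonneg y) p
  rcases le_total |y| |x| with hyx | hxy
  · have := mul_le_mul_of_nonneg_left (sq_le_sq.2 (by simpa using hyx))
      (rpow_nonneg (abs_nonneg x) (p - 2))
    linarith [abs_rpow_sub_two_mul_sq hp0 x]
  · have := mul_le_mul_of_nonneg_right
      (rpow_le_rpow (abs_nonneg x) hxy (by linarith : 0 ≤ p - 2)) (sq_nonneg y)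
    linarith [abs_rpow_sub_two_mul_sq hp0 y]

lemma hasDerivAt_abs_rpow_sub_two_mul_self {p : ℝ} (hp : 2 ≤ p) (x : ℝ) :
    HasDerivAt (fun x => |x| ^ (p - 2) * x) ((p - 1) * |x| ^ (p - 2)) x := by
  rcases eq_or_ne x 0 with rfl | hx
  · rcases hp.eq_or_lt with rfl | hp
    · simpa using (hasDerivAt_id' (0 : ℝ)).congr_deriv (by norm_num)
    rw [hasDerivAt_iff_tendsto_slope, abs_zero, zero_rpow (by linarith), mul_zero]
    have hcont : Tendsto (fun y : ℝ => |y| ^ (p - 2)) (𝓝[≠] 0) (𝓝 0) := by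
      have := ((continuous_abs.rpow_const fun _ => Or.inr (by linarith : 0 ≤ p - 2)).tendsto 0)
      simpa [zero_rpow (by linarith : p - 2 ≠ 0)] using this.mono_left nhdsWithin_le_nhds
    refine hcont.congr' (eventually_nhdsWithin_of_forall fun y (hy : y ≠ 0) => ?_)
    simp [slope_def_field, abs_zero, zero_rpow (by linarith : p - 2 ≠ 0), hy]
  · refine (((hasDerivAt_abs hx).rpow_const (p := p - 2) (Or.inl (abs_ne_zero.2 hx))).mul
      (hasDerivAt_id' x)).congr_deriv ?_
    have : |x| ^ (p - 2 - 1) * x * SignType.sign x = |x| ^ (p - 2) := by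
      rw [mul_assoc, self_mul_sign, ← rpow_add_one (abs_ne_zero.2 hx)]; ring_nf
    linear_combination (p - 2) * this

lemma monotoneOn_Icc_of_hasDerivAt2_nonneg {f f' f'' : ℝ → ℝ} {s t : ℝ} (hst : s ≤ t)
    (hf : ∀ x, HasDerivAt f (f' x) x) (hf' : ∀ x, HasDerivAt f' (f'' x) x)
    (hf's : 0 ≤ f' s) (hf'' : ∀ x ∈ Ioo s t, 0 ≤ f'' x) : MonotoneOn f (Icc s t) := by
  have hmono' : MonotoneOn f' (Icc s t) :=
    monotoneOn_of_hasDerivWithinAt_nonneg (convex_Icc s t)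
      (fun x _ => (hf' x).continuousAt.continuousWithinAt) (fun x _ => (hf' x).hasDerivWithinAt)
      (by rwa [interior_Icc])
  refine monotoneOn_of_hasDerivWithinAt_nonneg (convex_Icc s t)
    (fun x _ => (hf x).continuousAt.continuousWithinAt) (fun x _ => (hf x).hasDerivWithinAt) ?_
  rw [interior_Icc]
  exact fun x hx => hf's.trans
    (hmono' (left_mem_Icc.2 hst) (Ioo_subset_Icc_self hx) hx.1.le)

lemma abs_add_rpow_add_abs_sub_rpow (q a c : ℝ) :
    |a + c| ^ q + |a - c| ^ q = (|a| + |c|) ^ q + |(|a| - |c|)| ^ q := by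
  rcases le_total 0 a with ha | ha <;> rcases le_total 0 c with hc | hc
  · rw [abs_of_nonneg ha, abs_of_nonneg hc, abs_of_nonneg (add_nonneg ha hc)]
  · rw [abs_of_nonneg ha, abs_of_nonpos hc, sub_neg_eq_add, ← sub_eq_add_neg,
      abs_of_nonneg (by linarith : 0 ≤ a - c), add_comm]
  · rw [abs_of_nonpos ha, abs_of_nonneg hc, ← abs_neg (a + c), ← abs_neg (a - c),
      abs_of_nonneg (by linarith : 0 ≤ -(a - c))]
    ring_nf
  · rw [abs_of_nonpos ha, abs_of_nonpos hc, ← abs_neg (a + c),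
      abs_of_nonneg (by linarith : 0 ≤ -(a + c)), ← abs_neg (a - c)]
    ring_nf

lemma add_rpow_le_three_mul_rpow {q x y : ℝ} (hq : 0 ≤ q) (hx : 0 ≤ x) (hy : 0 ≤ y)
    (hxy : (q + 1) * y ≤ x) : (x + y) ^ q ≤ 3 * x ^ q := by
  have hq1 : 0 < q + 1 := by linarith
  have hle : x + y ≤ x * exp (1 / (q + 1)) := by
    have := add_one_le_exp (1 / (q + 1))
    have : y ≤ x * (1 / (q + 1)) := by rw [mul_one_div, le_div_iff₀ hq1]; linarith
    nlinarith
  calc (x + y) ^ q ≤ (x * exp (1 / (q + 1))) ^ q := rpow_le_rpow (by positivity) hle hq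
    _ = x ^ q * exp (q / (q + 1)) := by
      rw [mul_rpow hx (exp_pos _).le, ← exp_mul, one_div_mul_eq_div]
    _ ≤ x ^ q * 3 := by
      gcongr
      calc exp (q / (q + 1)) ≤ exp 1 := exp_le_exp.2 ((div_le_one hq1).2 (by linarith))
        _ ≤ 3 := by linarith [exp_one_lt_d9]
    _ = 3 * x ^ q := mul_comm _ _

lemma abs_add_rpow_add_abs_sub_rpow_le {q : ℝ} (hq : 0 ≤ q) (a c : ℝ) :
    |a + c| ^ q + |a - c| ^ q ≤ 4 * |a| ^ q + 2 * ((q + 2) * |c|) ^ q := by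
  rw [abs_add_rpow_add_abs_sub_rpow]
  have ha := abs_nonneg a
  have hc := abs_nonneg c
  rcases le_or_gt ((q + 1) * |c|) |a| with hsmall | hlarge
  · have h1 := add_rpow_le_three_mul_rpow hq ha hc hsmall
    have h2 : |(|a| - |c|)| ^ q ≤ |a| ^ q := by
      refine rpow_le_rpow (abs_nonneg _) ?_ hq
      rw [abs_of_nonneg (by nlinarith)]
      linarith
    have h3 : 0 ≤ ((q + 2) * |c|) ^ q := by positivity
    linarith
  · have h1 : (|a| + |c|) ^ q ≤ ((q + 2) * |c|) ^ q :=
      rpow_le_rpow (by positivity) (by linarith) hq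
    have h2 : |(|a| - |c|)| ^ q ≤ ((q + 2) * |c|) ^ q :=
      rpow_le_rpow (abs_nonneg _) (by rw [abs_le]; constructor <;> nlinarith) hq
    have h3 : 0 ≤ |a| ^ q := by positivity
    linarith

theorem abs_add_rpow_add_abs_sub_rpow_sub_le {p : ℝ} (hp : 2 ≤ p) (a b : ℝ) :
    |a + b| ^ p + |a - b| ^ p - 2 * |a| ^ p ≤
      2 * p * (p - 1) * |a| ^ (p - 2) * b ^ 2 + 2 * p ^ (p - 2) * |b| ^ p := by
  have hp0 : p ≠ 0 := by linarith
  set A := 2 * p * (p - 1) * |a| ^ (p - 2) * b ^ 2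
  set B := 2 * p ^ (p - 2) * |b| ^ p
  have hline (c t : ℝ) : HasDerivAt (fun t => a + t * c) c t := by
    simpa using ((hasDerivAt_id t).mul_const c).const_add a
  have hF (c t : ℝ) : HasDerivAt (fun t => |a + t * c| ^ p)
      (p * (|a + t * c| ^ (p - 2) * (a + t * c)) * c) t :=
    ((hasDerivAt_abs_rpow _ (by linarith)).comp t (hline c t)).congr_deriv (by ring)
  have hF' (c t : ℝ) : HasDerivAt (fun t => p * (|a + t * c| ^ (p - 2) * (a + t * c)) * c)
      (p * (p - 1) * |a + t * c| ^ (p - 2) * c ^ 2) t := by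
    exact ((((hasDerivAt_abs_rpow_sub_two_mul_self hp _).comp t (hline c t)).const_mul p).mul_const
      c).congr_deriv (by ring)
  -- `h t := 2|a|^p + A t^2 + B t^p - |a + t b|^p - |a - t b|^p` has `h 0 = h' 0 = 0` and `h'' ≥ 0`.
  have hW (t : ℝ) : HasDerivAt (fun t => 2 * |a| ^ p + A * t ^ 2 + B * t ^ p)
      (A * (2 * t) + B * (p * t ^ (p - 1))) t := by
    refine ((((hasDerivAt_pow 2 t).const_mul A).const_add _).add
      ((hasDerivAt_rpow_const (Or.inr (by linarith))).const_mul B)).congr_deriv ?_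
    norm_num
  have hW' (t : ℝ) : HasDerivAt (fun t => A * (2 * t) + B * (p * t ^ (p - 1)))
      (2 * A + B * (p * ((p - 1) * t ^ (p - 2)))) t := by
    refine ((((hasDerivAt_id t).const_mul 2).const_mul A).add
      (((hasDerivAt_rpow_const (Or.inr (by linarith))).const_mul p).const_mul B)).congr_deriv ?_
    norm_num
    ring_nf
  have hmono := monotoneOn_Icc_of_hasDerivAt2_nonneg zero_le_one
    (fun t => (hW t).sub ((hF b t).add (hF (-b) t)))
    (fun t => (hW' t).sub ((hF' b t).add (hF' (-b) t))) ?_ ?_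
  · have := hmono (left_mem_Icc.2 zero_le_one) (right_mem_Icc.2 zero_le_one) zero_le_one
    simp only [Pi.sub_apply, Pi.add_apply, mul_neg, ← sub_eq_add_neg, zero_rpow hp0, one_rpow,
      zero_mul, one_mul, mul_zero, mul_one, add_zero, sub_zero, one_pow,
      zero_pow two_ne_zero] at this
    linarith
  · simp [zero_rpow (by linarith : p - 1 ≠ 0)]
  · intro t ht
    have hS := abs_add_rpow_add_abs_sub_rpow_le (q := p - 2) (by linarith) a (t * b)
    rw [show p - 2 + 2 = p by ring, abs_mul, abs_of_pos ht.1, mul_left_comm,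
      mul_rpow ht.1.le (by positivity), mul_rpow (by linarith) (abs_nonneg b)] at hS
    have hc : 0 ≤ p * (p - 1) * b ^ 2 := mul_nonneg (by nlinarith) (sq_nonneg b)
    simp only [A, B, mul_neg, neg_sq, ← sub_eq_add_neg, ← abs_rpow_sub_two_mul_sq hp0 b]
    linear_combination mul_le_mul_of_nonneg_left hS hc

lemma abs_add_rpow_add_abs_sub_rpow_sub_div_le {p : ℝ} (hp : 2 ≤ p) (a b : ℝ) :
    (|a + b| ^ p + |a - b| ^ p - 2 * |a| ^ p) / (p * (p - 1)) ≤
      2 * p / (p - 1) * (|a| ^ (p - 2) * b ^ 2) + p ^ p * |b| ^ p := by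
  have hp1 : 0 < p - 1 := by linarith
  have hpp : p ^ p = p ^ (p - 2) * p ^ 2 := by
    rw [← rpow_natCast, ← rpow_add (by linarith)]; norm_num
  have hX : 0 ≤ |a| ^ (p - 2) * b ^ 2 := by positivity
  have hY : 0 ≤ p ^ (p - 2) * |b| ^ p := by positivity
  rw [div_le_iff₀ (by positivity), add_mul, hpp,
    show 2 * p / (p - 1) * (|a| ^ (p - 2) * b ^ 2) * (p * (p - 1)) =
      2 * p ^ 2 * (|a| ^ (p - 2) * b ^ 2) by field_simp]
  have := abs_add_rpow_add_abs_sub_rpow_sub_le hp a b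
  have hp3 : 2 ≤ p ^ 2 * p * (p - 1) := by
    have : 4 ≤ p ^ 2 := by nlinarith
    nlinarith [mul_le_mul this (show 2 ≤ p * (p - 1) by nlinarith) (by norm_num) (by positivity)]
  nlinarith [mul_le_mul_of_nonneg_right hp3 hY]

section Integrals

variable {Ω : Type*} [MeasurableSpace Ω] {μ : Measure Ω}

lemma memLp_ofReal_iff_integrable_abs_rpow {f : Ω → ℝ} (hf : AEStronglyMeasurable f μ) {p : ℝ}
    (hp : 0 < p) : MemLp f (ENNReal.ofReal p) μ ↔ Integrable (fun ω => |f ω| ^ p) μ := by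
  rw [← integrable_norm_rpow_iff hf (by simpa) ENNReal.ofReal_ne_top,
    ENNReal.toReal_ofReal hp.le]
  simp only [Real.norm_eq_abs]

lemma memLp_dotProduct {ι : Type*} [Fintype ι] {p : ENNReal} {Z : Ω → ι → ℝ}
    (hZ : ∀ i, MemLp (fun ω => Z ω i) p μ) (u : ι → ℝ) :
    MemLp (fun ω => u ⬝ᵥ Z ω) p μ :=
  memLp_finsetSum _ fun i _ => (hZ i).const_mul (u i)

lemma integral_mul_dotProduct_sq {ι : Type*} [Fintype ι] (k : Ω → ℝ) (Z : Ω → ι → ℝ)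
    (hkZ : ∀ i j, Integrable (fun ω => k ω * (Z ω i * Z ω j)) μ) (u : ι → ℝ) :
    ∫ ω, k ω * (u ⬝ᵥ Z ω) ^ 2 ∂μ =
      u ⬝ᵥ (Matrix.of (fun i j => ∫ ω, k ω * (Z ω i * Z ω j) ∂μ) *ᵥ u) := by
  have hexpand (ω : Ω) : k ω * (u ⬝ᵥ Z ω) ^ 2 =
      ∑ i, ∑ j, u i * u j * (k ω * (Z ω i * Z ω j)) := by
    rw [sq, dotProduct, Finset.sum_mul_sum]
    simp only [Finset.mul_sum]
    exact Finset.sum_congr rfl fun i _ => Finset.sum_congr rfl fun j _ => by ring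
  simp_rw [hexpand]
  rw [integral_finsetSum _ fun i _ => integrable_finsetSum _ fun j _ => (hkZ i j).const_mul _]
  refine Finset.sum_congr rfl fun i _ => ?_
  rw [integral_finsetSum _ fun j _ => (hkZ i j).const_mul _, mulVec, dotProduct, Finset.mul_sum]
  refine Finset.sum_congr rfl fun j _ => ?_
  rw [integral_const_mul, of_apply]
  ring

variable {p : ℝ} {f g h : Ω → ℝ}

lemma integrable_abs_rpow_sub_two_mul_sq (hp : 2 ≤ p) (hf : MemLp f (ENNReal.ofReal p) μ)
    (hg : MemLp g (ENNReal.ofReal p) μ) :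
    Integrable (fun ω => |f ω| ^ (p - 2) * g ω ^ 2) μ := by
  have hp0 : 0 < p := by linarith
  refine Integrable.mono' (((memLp_ofReal_iff_integrable_abs_rpow hf.1 hp0).1 hf).add
    ((memLp_ofReal_iff_integrable_abs_rpow hg.1 hp0).1 hg)) ?_ (ae_of_all _ fun ω => ?_)
  · exact (hf.1.aemeasurable.abs.pow_const _ |>.mul
      (hg.1.aemeasurable.pow_const 2)).aestronglyMeasurable
  · rw [Real.norm_eq_abs, abs_of_nonneg (by positivity)]
    exact abs_rpow_sub_two_mul_sq_le hp _ _

lemma integrable_abs_rpow_sub_two_mul_mul (hp : 2 ≤ p) (hf : MemLp f (ENNReal.ofReal p) μ)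
    (hg : MemLp g (ENNReal.ofReal p) μ) (hh : MemLp h (ENNReal.ofReal p) μ) :
    Integrable (fun ω => |f ω| ^ (p - 2) * (g ω * h ω)) μ := by
  refine Integrable.mono' ((integrable_abs_rpow_sub_two_mul_sq hp hf hg).add
    (integrable_abs_rpow_sub_two_mul_sq hp hf hh)) ?_ (ae_of_all _ fun ω => ?_)
  · exact (hf.1.aemeasurable.abs.pow_const _ |>.mul
      (hg.1.aemeasurable.mul hh.1.aemeasurable)).aestronglyMeasurable
  · rw [Real.norm_eq_abs, abs_mul, abs_of_nonneg (by positivity), abs_mul, Pi.add_apply,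
      ← mul_add]
    gcongr
    nlinarith [sq_nonneg (|g ω| - |h ω|), sq_abs (g ω), sq_abs (h ω)]

lemma integral_abs_add_rpow_add_integral_abs_sub_rpow_sub_le (hp : 2 ≤ p)
    (hf : MemLp f (ENNReal.ofReal p) μ) (hg : MemLp g (ENNReal.ofReal p) μ) :
    (∫ ω, |f ω + g ω| ^ p ∂μ + ∫ ω, |f ω - g ω| ^ p ∂μ - 2 * ∫ ω, |f ω| ^ p ∂μ) /
        (p * (p - 1)) ≤
      2 * p / (p - 1) * ∫ ω, |f ω| ^ (p - 2) * g ω ^ 2 ∂μ + p ^ p * ∫ ω, |g ω| ^ p ∂μ := by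
  have hp0 : 0 < p := by linarith
  have hint {k : Ω → ℝ} (hk : MemLp k (ENNReal.ofReal p) μ) :
      Integrable (fun ω => |k ω| ^ p) μ :=
    (memLp_ofReal_iff_integrable_abs_rpow hk.1 hp0).1 hk
  have hadd : Integrable (fun ω => |f ω + g ω| ^ p) μ := hint (hf.add hg)
  have hsub : Integrable (fun ω => |f ω - g ω| ^ p) μ := hint (hf.sub hg)
  have hsum : Integrable (fun ω => |f ω + g ω| ^ p + |f ω - g ω| ^ p) μ := hadd.add hsub
  have hquad := (integrable_abs_rpow_sub_two_mul_sq hp hf hg).const_mul (2 * p / (p - 1))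
  calc _ = ∫ ω, (|f ω + g ω| ^ p + |f ω - g ω| ^ p - 2 * |f ω| ^ p) / (p * (p - 1)) ∂μ := by
        rw [integral_div, integral_sub hsum ((hint hf).const_mul 2),
          integral_add hadd hsub, integral_const_mul]
    _ ≤ ∫ ω, (2 * p / (p - 1) * (|f ω| ^ (p - 2) * g ω ^ 2) + p ^ p * |g ω| ^ p) ∂μ :=
        integral_mono ((hsum.sub ((hint hf).const_mul 2)).div_const _)
          (hquad.add ((hint hg).const_mul _))
          fun ω => abs_add_rpow_add_abs_sub_rpow_sub_div_le hp (f ω) (g ω)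
    _ = _ := by rw [integral_add hquad ((hint hg).const_mul _), integral_const_mul,
        integral_const_mul]

end Integrals

theorem excess_risk_upper_bound_p_ge_two_general
    {Ω : Type*} [MeasurableSpace Ω] (P : Measure Ω)
    {d : ℕ} (X : Ω → Fin d → ℝ) (Y : Ω → ℝ) (hX : Measurable X) (hY : Measurable Y)
    (p : ℝ) (hp : 2 ≤ p)
    (hYp : Integrable (fun ω => |Y ω| ^ p) P)
    (hXp : ∀ j : Fin d, Integrable (fun ω => |X ω j| ^ p) P)
    (Rp : (Fin d → ℝ) → ℝ)
    (hRp : Rp = fun w => ∫ ω, |∑ j, w j * X ω j - Y ω| ^ p / (p * (p - 1)) ∂P)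
    (wstar : Fin d → ℝ) (hstar : ∀ w, Rp wstar ≤ Rp w)
    (Hp : Matrix (Fin d) (Fin d) ℝ)
    (hHp : Hp = Matrix.of fun i j =>
      ∫ ω, |∑ j', wstar j' * X ω j' - Y ω| ^ (p - 2) * (X ω i * X ω j) ∂P)
    (w : Fin d → ℝ) :
    Rp w - Rp wstar ≤
      (2 * p / (p - 1)) * ((w - wstar) ⬝ᵥ (Hp *ᵥ (w - wstar))) +
        p ^ p * ∫ ω, |∑ j, (w j - wstar j) * X ω j| ^ p ∂P := by
  have hp0 : 0 < p := by linarith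
  have hXL (j : Fin d) : MemLp (fun ω => X ω j) (ENNReal.ofReal p) P :=
    (memLp_ofReal_iff_integrable_abs_rpow
      ((measurable_pi_apply j).comp hX).aestronglyMeasurable hp0).2 (hXp j)
  have hYL := (memLp_ofReal_iff_integrable_abs_rpow hY.aestronglyMeasurable hp0).2 hYp
  set f := fun ω => wstar ⬝ᵥ X ω - Y ω
  set g := fun ω => (w - wstar) ⬝ᵥ X ω
  have hf : MemLp f (ENNReal.ofReal p) P := (memLp_dotProduct hXL wstar).sub hYL
  have hR (v : Fin d → ℝ) (k : Ω → ℝ) (hk : ∀ ω, v ⬝ᵥ X ω - Y ω = k ω) :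
      Rp v = (∫ ω, |k ω| ^ p ∂P) / (p * (p - 1)) := by
    simp only [hRp, ← hk]
    exact integral_div _ _
  have hquad : (w - wstar) ⬝ᵥ (Hp *ᵥ (w - wstar)) = ∫ ω, |f ω| ^ (p - 2) * g ω ^ 2 ∂P := by
    rw [hHp, integral_mul_dotProduct_sq _ _
      fun i j => integrable_abs_rpow_sub_two_mul_mul hp hf (hXL i) (hXL j)]
    rfl
  calc Rp w - Rp wstar ≤ Rp w + Rp (2 • wstar - w) - 2 * Rp wstar := by
        linarith [hstar (2 • wstar - w)]
    _ = (∫ ω, |f ω + g ω| ^ p ∂P + ∫ ω, |f ω - g ω| ^ p ∂P - 2 * ∫ ω, |f ω| ^ p ∂P) /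
          (p * (p - 1)) := by
        rw [hR w (fun ω => f ω + g ω) fun ω => ?_,
          hR (2 • wstar - w) (fun ω => f ω - g ω) fun ω => ?_, hR wstar f fun _ => rfl]
        · ring
        all_goals simp only [f, g, sub_dotProduct, smul_dotProduct]; ring
    _ ≤ _ := by
        rw [hquad]
        exact integral_abs_add_rpow_add_integral_abs_sub_rpow_sub_le hp hf
          (memLp_dotProduct hXL _)

/-- upper bound on the excess risk for `p ∈ [2, ∞)`
(inequality `eq:upperboundpgeq2` of Lemma `lem:boundsgeq2`). -/
theorem excess_risk_upper_bound_p_ge_two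
    {Ω : Type*} [MeasurableSpace Ω] (P : Measure Ω) [IsProbabilityMeasure P]
    {d : ℕ} (X : Ω → Fin d → ℝ) (Y : Ω → ℝ) (hX : Measurable X) (hY : Measurable Y)
    (p : ℝ) (hp : 2 ≤ p)
    (hYp : Integrable (fun ω => |Y ω| ^ p) P)
    (hXp : ∀ j : Fin d, Integrable (fun ω => |X ω j| ^ p) P)
    (Rp : (Fin d → ℝ) → ℝ)
    (hRp : Rp = fun w => ∫ ω, |∑ j, w j * X ω j - Y ω| ^ p / (p * (p - 1)) ∂P)
    (wstar : Fin d → ℝ) (hstar : ∀ w, Rp wstar ≤ Rp w)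
    (Hp : Matrix (Fin d) (Fin d) ℝ)
    (hHp : Hp = Matrix.of fun i j =>
      ∫ ω, |∑ j', wstar j' * X ω j' - Y ω| ^ (p - 2) * (X ω i * X ω j) ∂P)
    (w : Fin d → ℝ) :
    Rp w - Rp wstar ≤
      (2 * p / (p - 1)) * ((w - wstar) ⬝ᵥ (Hp *ᵥ (w - wstar))) +
        p ^ p * ∫ ω, |∑ j, (w j - wstar j) * X ω j| ^ p ∂P :=
  excess_risk_upper_bound_p_ge_two_general P X Y hX hY p hp hYp hXp Rp hRp wstar hstar Hp hHp w
end

section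
/- Let p ∈ (1, 2), n ∈ ℕ, and let (x_i, y_i)_{i=1}^n be any points in ℝ^d × ℝ. Then for all w, w₀ ∈ ℝ^d: (1/n) Σ_{i=1}^n [ℓ_p(⟨w, x_i⟩ − y_i) − ℓ_p(⟨w₀, x_i⟩ − y_i)] ≥ (1/(4p²)) · (1/n) Σ_{i=1}^n γ_p(|⟨w₀, x_i⟩ − y_i|, |⟨w − w₀, x_i⟩|) + ⟨(1/n) Σ_{i=1}^n ℓ_p'(⟨w₀, x_i⟩ − y_i) x_i, w − w₀⟩. -/
/-!
Let `D(a, δ) = |a + δ| ^ p - |a| ^ p - p sgn(a) |a| ^ (p - 1) δ` be the Bregman divergence of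
`|·| ^ p`. The `i`-th summand of the theorem is `D(a, δ) / (p (p - 1))` with
`a = ⟨w₀, xᵢ⟩ - yᵢ` and `δ = ⟨w - w₀, xᵢ⟩`, so it suffices to show
`c γ_p(|a|, |δ|) ≤ D(a, δ)` for `c ≤ (p - 1) / 3`, and to take `c = (p - 1) / (4p)`.
As `D(-a, -δ) = D(a, δ)`, we may assume `δ = z ≥ 0`.

By concavity of `u ↦ u ^ (p - 1)`, the signed power `s ↦ sgn(s) |s| ^ (p - 1)` increases on
`[a, b]` by at least `(p - 1) (b - a) (|a| + |b|) ^ (p - 2)`. Since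
`|a| + |a + z| ≤ 3 max(|a|, z)`, this makes `∂_z D(a, z)` dominate
`(p - 1) / 3 · ∂_z γ_p(|a|, z)` on both ranges `z ≤ |a|` and `z ≥ |a|`. Both sides vanish at
`z = 0` and `γ_p(|a|, ·)` is continuous at `|a|`, so the inequality follows by monotonicity.
-/

open Finset

/-- The function `γ_p(t, x)` of Bubeck–Cohen–Lee–Li: for `t, x ∈ [0, ∞)`,
`γ_p(t,x) = (p/2) t^{p−2} x²` if `x ≤ t` and `γ_p(t,x) = x^p − (1 − p/2) t^p` if `x > t`
(with `γ_p(0,0) = 0`, using the junk value `0^{p-2} = 0` of `Real.rpow`). -/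
noncomputable def gammaP (p t x : ℝ) : ℝ :=
  if x ≤ t then p / 2 * t ^ (p - 2) * x ^ 2 else x ^ p - (1 - p / 2) * t ^ p

noncomputable def signPow (q x : ℝ) : ℝ := Real.sign x * |x| ^ q

lemma signPow_of_nonneg {q x : ℝ} (hq : 0 < q) (hx : 0 ≤ x) : signPow q x = x ^ q := by
  rcases hx.eq_or_lt with rfl | hx
  · simp [signPow, Real.sign_zero, Real.zero_rpow hq.ne']
  · rw [signPow, Real.sign_of_pos hx, abs_of_pos hx, one_mul]

lemma signPow_neg (q x : ℝ) : signPow q (-x) = -signPow q x := by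
  rw [signPow, signPow, Real.sign_neg, abs_neg, neg_mul]

lemma signPow_of_nonpos {q x : ℝ} (hq : 0 < q) (hx : x ≤ 0) : signPow q x = -(-x) ^ q := by
  rw [← neg_neg x, signPow_neg, signPow_of_nonneg hq (neg_nonneg.mpr hx), neg_neg]

lemma hasDerivAt_abs_rpow_signPow {p : ℝ} (hp : 1 < p) (x : ℝ) :
    HasDerivAt (fun x : ℝ ↦ |x| ^ p) (p * signPow (p - 1) x) x := by
  convert hasDerivAt_abs_rpow x hp using 1
  rcases lt_trichotomy x 0 with hx | rfl | hx
  · rw [signPow, Real.sign_of_neg hx, show p - 1 = p - 2 + 1 by ring,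
      Real.rpow_add_one (abs_ne_zero.mpr hx.ne), abs_of_neg hx]
    ring
  · simp [signPow, Real.sign_zero]
  · rw [signPow, Real.sign_of_pos hx, show p - 1 = p - 2 + 1 by ring,
      Real.rpow_add_one (abs_ne_zero.mpr hx.ne'), abs_of_pos hx]
    ring

lemma mul_sub_mul_rpow_le_rpow_sub_rpow {q u v M : ℝ} (hq0 : 0 < q) (hq1 : q ≤ 1)
    (hu : 0 ≤ u) (huv : u ≤ v) (hvM : v ≤ M) :
    q * (v - u) * M ^ (q - 1) ≤ v ^ q - u ^ q := by
  rcases (hu.trans huv).eq_or_lt with rfl | hv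
  · simp [le_antisymm huv hu]
  -- Bernoulli's inequality is the tangent line of the concave `u ↦ u ^ q` at `v`.
  have hbern := rpow_one_add_le_one_add_mul_self
    (by linarith [div_nonneg hu hv.le] : (-1 : ℝ) ≤ u / v - 1) hq0.le hq1
  rw [add_sub_cancel, Real.div_rpow hu hv.le, div_le_iff₀ (Real.rpow_pos_of_pos hv q)] at hbern
  have hexpand : (1 + q * (u / v - 1)) * v ^ q = v ^ q - q * (v - u) * v ^ (q - 1) := by
    rw [Real.rpow_sub_one hv.ne']
    field_simp
    ring
  calc q * (v - u) * M ^ (q - 1) ≤ q * (v - u) * v ^ (q - 1) :=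
        mul_le_mul_of_nonneg_left (Real.rpow_le_rpow_of_nonpos hv hvM (by linarith))
          (mul_nonneg hq0.le (sub_nonneg.mpr huv))
    _ ≤ v ^ q - u ^ q := by linarith

lemma mul_sub_mul_rpow_le_signPow_sub {q a b : ℝ} (hq0 : 0 < q) (hq1 : q ≤ 1) (hab : a ≤ b) :
    q * (b - a) * (|a| + |b|) ^ (q - 1) ≤ signPow q b - signPow q a := by
  rcases le_or_gt 0 a with ha | ha
  · have hb : 0 ≤ b := ha.trans hab
    rw [signPow_of_nonneg hq0 ha, signPow_of_nonneg hq0 hb]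
    exact mul_sub_mul_rpow_le_rpow_sub_rpow hq0 hq1 ha hab
      (by rw [abs_of_nonneg hb]; linarith [abs_nonneg a])
  rcases le_or_gt b 0 with hb | hb
  · rw [signPow_of_nonpos hq0 ha.le, signPow_of_nonpos hq0 hb]
    have := mul_sub_mul_rpow_le_rpow_sub_rpow hq0 hq1 (neg_nonneg.mpr hb) (neg_le_neg hab)
      (by rw [abs_of_neg ha]; linarith [abs_nonneg b] : -a ≤ |a| + |b|)
    linarith
  · rw [signPow_of_nonpos hq0 ha.le, signPow_of_nonneg hq0 hb.le, abs_of_neg ha, abs_of_pos hb]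
    have hpos := mul_sub_mul_rpow_le_rpow_sub_rpow hq0 hq1 le_rfl hb.le (by linarith : b ≤ -a + b)
    have hneg := mul_sub_mul_rpow_le_rpow_sub_rpow hq0 hq1 le_rfl (neg_nonneg.mpr ha.le)
      (by linarith : -a ≤ -a + b)
    rw [Real.zero_rpow hq0.ne'] at hpos hneg
    linarith

lemma rpow_div_three_le_three_mul_rpow {p m : ℝ} (hp : 1 ≤ p) (hm : 0 ≤ m) :
    m ^ (p - 2) / 3 ≤ (3 * m) ^ (p - 2) := by
  have h3 : (3 : ℝ)⁻¹ ≤ 3 ^ (p - 2) := by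
    rw [← Real.rpow_neg_one]
    exact Real.rpow_le_rpow_of_exponent_le (by norm_num) (by linarith)
  rw [Real.mul_rpow (by norm_num) hm, div_eq_inv_mul]
  exact mul_le_mul_of_nonneg_right h3 (Real.rpow_nonneg hm _)

lemma mul_rpow_le_signPow_add_sub_signPow {p a z m : ℝ} (hp1 : 1 < p) (hp2 : p ≤ 2) (hz : 0 < z)
    (ham : |a| ≤ m) (hzm : z ≤ m) :
    (p - 1) / 3 * m ^ (p - 2) * z ≤ signPow (p - 1) (a + z) - signPow (p - 1) a := by
  have hinc := mul_sub_mul_rpow_le_signPow_sub (q := p - 1) (by linarith) (by linarith)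
    (le_add_of_nonneg_right hz.le : a ≤ a + z)
  rw [add_sub_cancel_left, show p - 1 - 1 = p - 2 by ring] at hinc
  have hS0 : 0 < |a| + |a + z| := by linarith [le_abs_self (a + z), neg_abs_le a]
  have hS3 : |a| + |a + z| ≤ 3 * m := by
    linarith [abs_add_le a z, abs_of_pos hz]
  calc (p - 1) / 3 * m ^ (p - 2) * z = (p - 1) * z * (m ^ (p - 2) / 3) := by ring
    _ ≤ (p - 1) * z * (3 * m) ^ (p - 2) :=
        mul_le_mul_of_nonneg_left (rpow_div_three_le_three_mul_rpow hp1.le (by linarith))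
          (by nlinarith)
    _ ≤ (p - 1) * z * (|a| + |a + z|) ^ (p - 2) :=
        mul_le_mul_of_nonneg_left (Real.rpow_le_rpow_of_nonpos hS0 hS3 (by linarith))
          (by nlinarith)
    _ ≤ _ := hinc

lemma le_of_hasDerivAt_of_nonneg {f f' : ℝ → ℝ} {a b : ℝ} (hab : a ≤ b)
    (hf : ∀ x, HasDerivAt f (f' x) x) (hf' : ∀ x ∈ Set.Ioo a b, 0 ≤ f' x) : f a ≤ f b :=
  monotoneOn_of_hasDerivWithinAt_nonneg (convex_Icc a b)
    (fun x _ ↦ (hf x).continuousAt.continuousWithinAt) (fun x _ ↦ (hf x).hasDerivWithinAt)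
    (by rwa [interior_Icc]) (Set.left_mem_Icc.2 hab) (Set.right_mem_Icc.2 hab) hab

lemma rpow_sub_two_mul_sq {p t : ℝ} (hp : p ≠ 0) (ht : 0 ≤ t) :
    t ^ (p - 2) * t ^ 2 = t ^ p := by
  rw [← Real.rpow_natCast, ← Real.rpow_add' ht (by simpa using hp)]
  norm_num

noncomputable def bregmanRpow (p a z : ℝ) : ℝ :=
  |a + z| ^ p - |a| ^ p - p * signPow (p - 1) a * z

lemma bregmanRpow_zero (p a : ℝ) : bregmanRpow p a 0 = 0 := by
  simp [bregmanRpow]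

lemma bregmanRpow_neg_neg (p a z : ℝ) : bregmanRpow p (-a) (-z) = bregmanRpow p a z := by
  rw [bregmanRpow, bregmanRpow, ← neg_add, abs_neg, abs_neg, signPow_neg]
  ring

lemma hasDerivAt_bregmanRpow {p : ℝ} (hp : 1 < p) (a z : ℝ) :
    HasDerivAt (bregmanRpow p a) (p * (signPow (p - 1) (a + z) - signPow (p - 1) a)) z := by
  have hpow := (hasDerivAt_abs_rpow_signPow hp (a + z)).comp z ((hasDerivAt_id z).const_add a)
  refine ((hpow.sub_const (|a| ^ p)).sub
    ((hasDerivAt_id z).const_mul (p * signPow (p - 1) a))).congr_deriv ?_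
  simp only [mul_one]
  ring

section

variable {p c a z : ℝ}

lemma mul_quadratic_le_bregmanRpow (hp1 : 1 < p) (hp2 : p ≤ 2) (hc : c ≤ (p - 1) / 3)
    (hz0 : 0 ≤ z) (hza : z ≤ |a|) :
    c * (p / 2 * |a| ^ (p - 2) * z ^ 2) ≤ bregmanRpow p a z := by
  have hderiv (u : ℝ) :
      HasDerivAt (fun u ↦ bregmanRpow p a u - c * (p / 2 * |a| ^ (p - 2)) * u ^ 2)
      (p * (signPow (p - 1) (a + u) - signPow (p - 1) a - c * |a| ^ (p - 2) * u)) u := by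
    refine ((hasDerivAt_bregmanRpow hp1 a u).sub ((hasDerivAt_pow 2 u).const_mul
      (c * (p / 2 * |a| ^ (p - 2))))).congr_deriv ?_
    push_cast
    ring
  have hmono := le_of_hasDerivAt_of_nonneg hz0 hderiv fun u hu ↦ by
    have hbound := mul_rpow_le_signPow_add_sub_signPow (a := a) hp1 hp2 hu.1 le_rfl
      (hu.2.le.trans hza)
    have hc' := mul_le_mul_of_nonneg_right hc
      (mul_nonneg (Real.rpow_nonneg (abs_nonneg a) (p - 2)) hu.1.le)
    nlinarith
  rw [bregmanRpow_zero] at hmono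
  linarith

lemma mul_rpow_sub_le_bregmanRpow (hp1 : 1 < p) (hp2 : p ≤ 2) (hc : c ≤ (p - 1) / 3)
    (haz : |a| ≤ z) :
    c * (z ^ p - (1 - p / 2) * |a| ^ p) ≤ bregmanRpow p a z := by
  have hderiv (u : ℝ) :
      HasDerivAt (fun u ↦ bregmanRpow p a u - c * (u ^ p - (1 - p / 2) * |a| ^ p))
      (p * (signPow (p - 1) (a + u) - signPow (p - 1) a) - c * (p * u ^ (p - 1))) u :=
    (hasDerivAt_bregmanRpow hp1 a u).sub
      (((Real.hasDerivAt_rpow_const (Or.inr hp1.le)).sub_const _).const_mul c)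
  have hmono := le_of_hasDerivAt_of_nonneg haz hderiv fun u hu ↦ by
    have hu0 : 0 < u := (abs_nonneg a).trans_lt hu.1
    have hbound := mul_rpow_le_signPow_add_sub_signPow (a := a) hp1 hp2 hu0 hu.1.le le_rfl
    rw [mul_assoc, ← Real.rpow_add_one hu0.ne', show p - 2 + 1 = p - 1 by ring] at hbound
    have hc' := mul_le_mul_of_nonneg_right hc (Real.rpow_nonneg hu0.le (p - 1))
    nlinarith
  have hat := mul_quadratic_le_bregmanRpow hp1 hp2 hc (abs_nonneg a) le_rfl
  rw [mul_assoc, rpow_sub_two_mul_sq (by linarith) (abs_nonneg a)] at hat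
  linarith

lemma mul_gammaP_le_bregmanRpow (hp1 : 1 < p) (hp2 : p ≤ 2) (hc : c ≤ (p - 1) / 3) (a δ : ℝ) :
    c * gammaP p |a| |δ| ≤ bregmanRpow p a δ := by
  wlog hδ : 0 ≤ δ generalizing a δ
  · simpa [bregmanRpow_neg_neg] using this (-a) (-δ) (by linarith)
  rw [abs_of_nonneg hδ, gammaP]
  split_ifs with hδa
  · exact mul_quadratic_le_bregmanRpow hp1 hp2 hc hδ hδa
  · exact mul_rpow_sub_le_bregmanRpow hp1 hp2 hc (le_of_not_ge hδa)

lemma gammaP_div_le_loss_sub_loss (hp1 : 1 < p) (hp2 : p ≤ 2) (a δ : ℝ) :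
    1 / (4 * p ^ 2) * gammaP p |a| |δ| ≤
      |a + δ| ^ p / (p * (p - 1)) - |a| ^ p / (p * (p - 1)) -
        Real.sign a * |a| ^ (p - 1) / (p - 1) * δ := by
  have hp0 : 0 < p - 1 := by linarith
  have hc : (p - 1) / (4 * p) ≤ (p - 1) / 3 :=
    div_le_div_of_nonneg_left hp0.le (by norm_num) (by linarith)
  calc 1 / (4 * p ^ 2) * gammaP p |a| |δ|
      = (p - 1) / (4 * p) * gammaP p |a| |δ| / (p * (p - 1)) := by
        field_simp
    _ ≤ bregmanRpow p a δ / (p * (p - 1)) :=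
        div_le_div_of_nonneg_right (mul_gammaP_le_bregmanRpow hp1 hp2 hc a δ) (by positivity)
    _ = _ := by
        rw [bregmanRpow, signPow]
        field_simp

end

/-- pointwise lower bound on the excess empirical risk for `p ∈ (1, 2)`
(inequality `eq:lowerboundpleq2` of Lemma `lem:boundsleq2`). -/
theorem empirical_excess_risk_lower_bound_p_lt_two
    (p : ℝ) (hp1 : 1 < p) (hp2 : p < 2) {d n : ℕ}
    (x : Fin n → Fin d → ℝ) (y : Fin n → ℝ)
    (w w₀ : Fin d → ℝ) :
    (1 / n : ℝ) * ∑ i, (|∑ j, w j * x i j - y i| ^ p / (p * (p - 1)) -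
        |∑ j, w₀ j * x i j - y i| ^ p / (p * (p - 1))) ≥
      (1 / (4 * p ^ 2)) *
        ((1 / n : ℝ) * ∑ i, gammaP p |∑ j, w₀ j * x i j - y i|
          |∑ j, (w j - w₀ j) * x i j|) +
      ∑ j, ((1 / n : ℝ) * ∑ i, (Real.sign (∑ j', w₀ j' * x i j' - y i) *
          |∑ j', w₀ j' * x i j' - y i| ^ (p - 1) / (p - 1)) * x i j) * (w j - w₀ j) := by
  set r : Fin n → ℝ := fun i ↦ ∑ j, w₀ j * x i j - y i
  set v : Fin n → ℝ := fun i ↦ ∑ j, (w j - w₀ j) * x i j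
  set g : Fin n → ℝ := fun i ↦ Real.sign (r i) * |r i| ^ (p - 1) / (p - 1)
  have hres (i : Fin n) : ∑ j, w j * x i j - y i = r i + v i := by
    simp only [r, v, sub_mul, sum_sub_distrib]
    ring
  have hgrad : ∑ j, ((1 / n : ℝ) * ∑ i, g i * x i j) * (w j - w₀ j) =
      (1 / n : ℝ) * ∑ i, g i * v i := by
    simp only [v, mul_sum, sum_mul]
    rw [sum_comm]
    exact sum_congr rfl fun i _ ↦ sum_congr rfl fun j _ ↦ by ring
  rw [ge_iff_le, hgrad, mul_left_comm, ← mul_add, mul_sum _ _ (1 / (4 * p ^ 2)),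
    ← sum_add_distrib]
  gcongr with i
  rw [hres i]
  exact le_sub_iff_add_le.mp (gammaP_div_le_loss_sub_loss hp1 hp2.le (r i) (v i))
end

section
/- Let p ∈ (1, 2) and let (X, Y) be a random pair in ℝ^d × ℝ. Assume P(|⟨w*_p, X⟩ − Y| > 0) = 1 and E[|⟨w*_p, X⟩ − Y|^{p−2}(X^j)²] < ∞ for all j ∈ {1,…,d}, where w*_p is a minimizer of R_p, and let H_p = E[|⟨w*_p, X⟩ − Y|^{p−2} X Xᵀ]. Then for all w ∈ ℝ^d: R_p(w) − R_p(w*_p) ≤ (4/(p−1)) (w − w*_p)ᵀ H_p (w − w*_p). -/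
open MeasureTheory Matrix

section ExcessRiskAux

open Real

-- Young: x^p ≤ (2-p)x + (p-1)x²
lemma my_young {p : ℝ} (hp1 : 1 < p) (hp2 : p < 2) {x : ℝ} (hx : 0 ≤ x) :
    x ^ p ≤ (2 - p) * x + (p - 1) * x ^ 2 := by
  rcases eq_or_lt_of_le hx with h | h
  · rw [← h, Real.zero_rpow (by linarith)]; norm_num
  · have h1 : x ^ p = x ^ (2 - p) * (x ^ 2) ^ (p - 1) := by
      rw [← Real.rpow_natCast x 2, ← Real.rpow_mul hx, ← Real.rpow_add h]
      ring_nf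
    rw [h1]
    exact Real.geom_mean_le_arith_mean2_weighted (by linarith) (by linarith) hx
      (by positivity) (by ring)

-- core: (1+r)^p + |1-r|^p ≤ 2 + 4p r²
lemma my_core {p : ℝ} (hp1 : 1 < p) (hp2 : p < 2) {r : ℝ} (hr : 0 ≤ r) :
    (1 + r) ^ p + |1 - r| ^ p ≤ 2 + 4 * p * r ^ 2 := by
  have h1 := my_young hp1 hp2 (show (0:ℝ) ≤ 1 + r by linarith)
  have h2 := my_young hp1 hp2 (abs_nonneg (1 - r))
  have hsq : |1 - r| ^ 2 = (1 - r) ^ 2 := sq_abs _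
  rcases le_total r 1 with h | h
  · rw [abs_of_nonneg (by linarith)] at h2 ⊢
    nlinarith [sq_nonneg r, sq_nonneg (1 - r)]
  · rw [abs_of_nonpos (by linarith)] at h2 ⊢
    nlinarith [sq_nonneg r, sq_nonneg (r - 1)]

-- sign analysis: {|a+b|, |a-b|} = {|a|+|b|, ||a|-|b||}
lemma my_signs (a b : ℝ) :
    (|a + b| = |a| + |b| ∧ |a - b| = |(|a| - |b|)|) ∨
    (|a + b| = |(|a| - |b|)| ∧ |a - b| = |a| + |b|) := by
  rcases le_total 0 a with ha | ha <;> rcases le_total 0 b with hb | hb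
  · left
    rw [abs_of_nonneg ha, abs_of_nonneg hb, abs_of_nonneg (add_nonneg ha hb)]
    exact ⟨rfl, rfl⟩
  · right
    rw [abs_of_nonneg ha, abs_of_nonpos hb, abs_of_nonneg (by linarith : (0:ℝ) ≤ a - b)]
    exact ⟨by congr 1; ring, by ring⟩
  · right
    rw [abs_of_nonpos ha, abs_of_nonneg hb, abs_of_nonpos (by linarith : a - b ≤ 0)]
    refine ⟨?_, by ring⟩
    rw [show -a - b = -(a + b) by ring, abs_neg]
  · left
    rw [abs_of_nonpos ha, abs_of_nonpos hb, abs_of_nonpos (by linarith : a + b ≤ 0)]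
    refine ⟨by ring, ?_⟩
    rw [show -a - -b = -(a - b) by ring, abs_neg]

-- scaled core
lemma my_scaled {p : ℝ} (hp1 : 1 < p) (hp2 : p < 2) {t s : ℝ} (ht : 0 < t) (hs : 0 ≤ s) :
    (t + s) ^ p + |t - s| ^ p ≤ 2 * t ^ p + 4 * p * (t ^ (p - 2) * s ^ 2) := by
  set r := s / t with hrdef
  have hr : 0 ≤ r := div_nonneg hs ht.le
  have hs' : t * r = s := by rw [hrdef, mul_comm, div_mul_cancel₀ _ ht.ne']
  have hts : t + s = t * (1 + r) := by rw [mul_add, mul_one, hs']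
  have hts2 : t - s = t * (1 - r) := by rw [mul_sub, mul_one, hs']
  have h1 : (t + s) ^ p = t ^ p * (1 + r) ^ p := by
    rw [hts, Real.mul_rpow ht.le (by linarith)]
  have h2 : |t - s| ^ p = t ^ p * |1 - r| ^ p := by
    rw [hts2, abs_mul, abs_of_pos ht, Real.mul_rpow ht.le (abs_nonneg _)]
  have h3 : t ^ (p - 2) * s ^ 2 = t ^ p * r ^ 2 := by
    rw [← hs', mul_pow, ← mul_assoc]
    congr 1
    rw [show t ^ (2:ℕ) = t ^ ((2:ℕ):ℝ) from (Real.rpow_natCast t 2).symm,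
      ← Real.rpow_add ht]
    norm_num
  rw [h1, h2, h3]
  have hcore := my_core hp1 hp2 hr
  have htp : 0 < t ^ p := Real.rpow_pos_of_pos ht p
  calc t ^ p * (1 + r) ^ p + t ^ p * |1 - r| ^ p
      = t ^ p * ((1 + r) ^ p + |1 - r| ^ p) := by ring
    _ ≤ t ^ p * (2 + 4 * p * r ^ 2) := mul_le_mul_of_nonneg_left hcore htp.le
    _ = 2 * t ^ p + 4 * p * (t ^ p * r ^ 2) := by ring

lemma my_key1 {p : ℝ} (hp1 : 1 < p) (hp2 : p < 2) {a b : ℝ} (ha : a ≠ 0) :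
    |a + b| ^ p + |a - b| ^ p ≤ 2 * |a| ^ p + 4 * p * (|a| ^ (p - 2) * b ^ 2) := by
  have ht : 0 < |a| := abs_pos.mpr ha
  have h := my_scaled hp1 hp2 (s := |b|) ht (abs_nonneg b)
  rw [sq_abs] at h
  rcases my_signs a b with ⟨h1, h2⟩ | ⟨h1, h2⟩ <;> rw [h1, h2] <;> linarith

lemma my_key3 {p : ℝ} (hp1 : 1 < p) (hp2 : p < 2) {a b : ℝ} (ha : a ≠ 0) :
    |a| ^ p ≤ 4 * |a + b| ^ p + 4 * (|a| ^ (p - 2) * b ^ 2) := by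
  have ht : 0 < |a| := abs_pos.mpr ha
  have habp : (0:ℝ) ≤ |a + b| ^ p := Real.rpow_nonneg (abs_nonneg _) p
  rcases le_total (|a| / 2) |b| with h | h
  · have h1 : |a| ^ p = |a| ^ (p - 2) * |a| ^ 2 := by
      rw [show |a| ^ (2:ℕ) = |a| ^ ((2:ℕ):ℝ) from (Real.rpow_natCast _ 2).symm,
        ← Real.rpow_add ht]
      norm_num
    have h2 : |a| ^ 2 ≤ 4 * b ^ 2 := by
      have hsb := sq_abs b
      nlinarith [abs_nonneg b, abs_nonneg a]
    have h3 : 0 < |a| ^ (p - 2) := Real.rpow_pos_of_pos ht _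
    nlinarith
  · have h1 : |a| / 2 ≤ |a + b| := by
      have h0 := abs_sub_abs_le_abs_sub a (-b)
      rw [abs_neg, sub_neg_eq_add] at h0
      linarith
    have h2 : (|a| / 2) ^ p ≤ |a + b| ^ p :=
      Real.rpow_le_rpow (by positivity) h1 (by linarith)
    have h3 : (|a| / 2) ^ p = |a| ^ p / 2 ^ p :=
      Real.div_rpow (abs_nonneg a) (by norm_num) p
    have h4 : (2:ℝ) ^ p ≤ 4 := by
      have h5 : (2:ℝ) ^ p ≤ 2 ^ (2:ℝ) :=
        Real.rpow_le_rpow_of_exponent_le (by norm_num) hp2.le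
      rwa [show (2:ℝ) ^ (2:ℝ) = 4 by
        rw [show (2:ℝ) ^ (2:ℝ) = 2 ^ ((2:ℕ):ℝ) by norm_num, Real.rpow_natCast]
        norm_num] at h5
    have h5 : 0 < (2:ℝ) ^ p := Real.rpow_pos_of_pos (by norm_num) p
    have h6 : |a| ^ p / 4 ≤ |a| ^ p / 2 ^ p :=
      div_le_div_of_nonneg_left (Real.rpow_nonneg (abs_nonneg a) p) h5 h4
    have h7 : 0 ≤ |a| ^ (p - 2) * b ^ 2 := by positivity
    nlinarith

end ExcessRiskAux

/-- upper bound on the excess risk for `p ∈ (1, 2)`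
(inequality `eq:upperboundleq2` of Lemma `lem:boundsleq2`). -/
theorem excess_risk_upper_bound_p_lt_two
    {Ω : Type*} [MeasurableSpace Ω] (P : Measure Ω) [IsProbabilityMeasure P]
    {d : ℕ} (X : Ω → Fin d → ℝ) (Y : Ω → ℝ) (hX : Measurable X) (hY : Measurable Y)
    (p : ℝ) (hp1 : 1 < p) (hp2 : p < 2)
    (Rp : (Fin d → ℝ) → ℝ)
    (hRp : Rp = fun w => ∫ ω, |∑ j, w j * X ω j - Y ω| ^ p / (p * (p - 1)) ∂P)
    (wstar : Fin d → ℝ) (hstar : ∀ w, Rp wstar ≤ Rp w)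
    (hnonreal : P {ω | |∑ j, wstar j * X ω j - Y ω| > 0} = 1)
    (hmix : ∀ j : Fin d, Integrable
      (fun ω => |∑ j', wstar j' * X ω j' - Y ω| ^ (p - 2) * (X ω j) ^ 2) P)
    (Hp : Matrix (Fin d) (Fin d) ℝ)
    (hHp : Hp = Matrix.of fun i j =>
      ∫ ω, |∑ j', wstar j' * X ω j' - Y ω| ^ (p - 2) * (X ω i * X ω j) ∂P)
    (w : Fin d → ℝ) :
    Rp w - Rp wstar ≤ (4 / (p - 1)) * ((w - wstar) ⬝ᵥ (Hp *ᵥ (w - wstar))) := by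
  -- notation
  set u : Ω → ℝ := fun ω => ∑ j, wstar j * X ω j - Y ω with hu
  set v : Ω → ℝ := fun ω => ∑ j, (w j - wstar j) * X ω j with hv
  have hu' : ∀ ω, (∑ j, wstar j * X ω j - Y ω) = u ω := fun ω => rfl
  have hv' : ∀ ω, (∑ j, (w j - wstar j) * X ω j) = v ω := fun ω => rfl
  simp only [hu'] at hmix hnonreal hHp
  have hpp : (0:ℝ) < p * (p - 1) := by nlinarith
  -- measurability
  have hXj : ∀ j, Measurable fun ω => X ω j := fun j => (measurable_pi_apply j).comp hX
  have hum : Measurable u := by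
    rw [hu]; exact (Finset.measurable_sum _ fun j _ => (hXj j).const_mul _).sub hY
  have hvm : Measurable v := by
    rw [hv]; exact Finset.measurable_sum _ fun j _ => (hXj j).const_mul _
  have hρm : Measurable fun ω => |u ω| ^ (p - 2) := by fun_prop
  -- a.e. nonvanishing
  have huae : ∀ᵐ ω ∂P, u ω ≠ 0 := by
    rw [ae_iff]
    have hset : {ω | ¬ u ω ≠ 0} = {ω | |u ω| > 0}ᶜ := by
      ext ω; simp [abs_pos]
    rw [hset, measure_compl (measurableSet_lt measurable_const hum.abs)
      (measure_ne_top _ _), hnonreal, measure_univ]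
    simp
  -- integrability of ρ Xᵢ Xⱼ
  have hρnn : ∀ ω, 0 ≤ |u ω| ^ (p - 2) := fun ω => Real.rpow_nonneg (abs_nonneg _) _
  have hij : ∀ i j, Integrable (fun ω => |u ω| ^ (p - 2) * (X ω i * X ω j)) P := by
    intro i j
    refine Integrable.mono' (((hmix i).add (hmix j)).const_mul (1/2 : ℝ))
      ((hρm.mul ((hXj i).mul (hXj j))).aestronglyMeasurable) (Filter.Eventually.of_forall fun ω => ?_)
    have h1 : |X ω i * X ω j| ≤ (X ω i ^ 2 + X ω j ^ 2) / 2 := by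
      rw [abs_mul]
      nlinarith [sq_nonneg (|X ω i| - |X ω j|), sq_abs (X ω i), sq_abs (X ω j),
        abs_nonneg (X ω i), abs_nonneg (X ω j)]
    simp only [Pi.add_apply]
    rw [Real.norm_eq_abs, abs_mul, abs_of_nonneg (hρnn ω)]
    calc |u ω| ^ (p - 2) * |X ω i * X ω j|
        ≤ |u ω| ^ (p - 2) * ((X ω i ^ 2 + X ω j ^ 2) / 2) :=
          mul_le_mul_of_nonneg_left h1 (hρnn ω)
      _ = 1/2 * (|u ω| ^ (p - 2) * X ω i ^ 2 + |u ω| ^ (p - 2) * X ω j ^ 2) := by ring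
  -- expansion of ρ v²
  have hexp : ∀ ω, |u ω| ^ (p - 2) * v ω ^ 2 =
      ∑ i, ∑ j, ((w i - wstar i) * (w j - wstar j)) *
        (|u ω| ^ (p - 2) * (X ω i * X ω j)) := by
    intro ω
    rw [hv]
    simp only
    rw [sq, Finset.sum_mul_sum, Finset.mul_sum]
    refine Finset.sum_congr rfl fun i _ => ?_
    rw [Finset.mul_sum]
    exact Finset.sum_congr rfl fun j _ => by ring
  have hMint : Integrable (fun ω => |u ω| ^ (p - 2) * v ω ^ 2) P := by
    have : (fun ω => |u ω| ^ (p - 2) * v ω ^ 2) = fun ω =>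
        ∑ i, ∑ j, ((w i - wstar i) * (w j - wstar j)) *
          (|u ω| ^ (p - 2) * (X ω i * X ω j)) := funext hexp
    rw [this]
    exact integrable_finset_sum _ fun i _ =>
      integrable_finset_sum _ fun j _ => ((hij i j).const_mul _)
  have hMnn : 0 ≤ ∫ ω, |u ω| ^ (p - 2) * v ω ^ 2 ∂P :=
    integral_nonneg fun ω => by positivity
  -- the quadratic form equals ∫ ρ v²
  have hQ : (w - wstar) ⬝ᵥ (Hp *ᵥ (w - wstar)) = ∫ ω, |u ω| ^ (p - 2) * v ω ^ 2 ∂P := by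
    have : ∫ ω, |u ω| ^ (p - 2) * v ω ^ 2 ∂P =
        ∑ i, ∑ j, ((w i - wstar i) * (w j - wstar j)) *
          ∫ ω, |u ω| ^ (p - 2) * (X ω i * X ω j) ∂P := by
      rw [show (fun ω => |u ω| ^ (p - 2) * v ω ^ 2) = fun ω =>
        ∑ i, ∑ j, ((w i - wstar i) * (w j - wstar j)) *
          (|u ω| ^ (p - 2) * (X ω i * X ω j)) from funext hexp]
      rw [integral_finset_sum _ fun i _ =>
        integrable_finset_sum _ fun j _ => ((hij i j).const_mul _)]
      refine Finset.sum_congr rfl fun i _ => ?_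
      rw [integral_finset_sum _ fun j _ => ((hij i j).const_mul _)]
      exact Finset.sum_congr rfl fun j _ => integral_const_mul _ _
    rw [this, hHp]
    simp only [dotProduct, mulVec, Matrix.of_apply, Pi.sub_apply, Finset.mul_sum]
    refine Finset.sum_congr rfl fun i _ => Finset.sum_congr rfl fun j _ => by ring
  -- rewriting Rp
  have hsum1 : ∀ ω, (∑ j, w j * X ω j - Y ω) = u ω + v ω := by
    intro ω
    show _ = (∑ j, wstar j * X ω j - Y ω) + ∑ j, (w j - wstar j) * X ω j
    have h : ∑ j, w j * X ω j
        = ∑ j, (wstar j * X ω j + (w j - wstar j) * X ω j) :=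
      Finset.sum_congr rfl fun j _ => by ring
    rw [h, Finset.sum_add_distrib]
    ring
  have hsum2 : ∀ ω, (∑ j, (2 * wstar j - w j) * X ω j - Y ω) = u ω - v ω := by
    intro ω
    show _ = (∑ j, wstar j * X ω j - Y ω) - ∑ j, (w j - wstar j) * X ω j
    have h : ∑ j, (2 * wstar j - w j) * X ω j
        = ∑ j, (wstar j * X ω j - (w j - wstar j) * X ω j) :=
      Finset.sum_congr rfl fun j _ => by ring
    rw [h, Finset.sum_sub_distrib]
    ring
  have hRw : Rp w = (∫ ω, |u ω + v ω| ^ p ∂P) / (p * (p - 1)) := by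
    simp only [hRp]
    rw [← integral_div]
    exact integral_congr_ae (Filter.Eventually.of_forall fun ω => by simp only [hsum1 ω])
  have hRstar : Rp wstar = (∫ ω, |u ω| ^ p ∂P) / (p * (p - 1)) := by
    simp only [hRp]
    rw [← integral_div]
  have hRw2 : Rp (fun j => 2 * wstar j - w j) = (∫ ω, |u ω - v ω| ^ p ∂P) / (p * (p - 1)) := by
    simp only [hRp]
    rw [← integral_div]
    exact integral_congr_ae (Filter.Eventually.of_forall fun ω => by simp only [hsum2 ω])
  have hBC : (∫ ω, |u ω| ^ p ∂P) ≤ ∫ ω, |u ω - v ω| ^ p ∂P := by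
    have h := hstar (fun j => 2 * wstar j - w j)
    rw [hRstar, hRw2] at h
    exact (div_le_div_iff_of_pos_right hpp).mp h
  by_cases hBint : Integrable (fun ω => |u ω| ^ p) P
  · -- integrable case
    have hkey : ∀ᵐ ω ∂P, |u ω + v ω| ^ p + |u ω - v ω| ^ p ≤
        2 * |u ω| ^ p + 4 * p * (|u ω| ^ (p - 2) * v ω ^ 2) := by
      filter_upwards [huae] with ω hω
      exact my_key1 hp1 hp2 hω
    have hbound : Integrable
        (fun ω => 2 * |u ω| ^ p + 4 * p * (|u ω| ^ (p - 2) * v ω ^ 2)) P :=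
      (hBint.const_mul 2).add (hMint.const_mul (4 * p))
    have hfm : Measurable fun ω => |u ω + v ω| ^ p := by fun_prop
    have hhm : Measurable fun ω => |u ω - v ω| ^ p := by fun_prop
    have hAint : Integrable (fun ω => |u ω + v ω| ^ p) P := by
      refine hbound.mono' hfm.aestronglyMeasurable ?_
      filter_upwards [hkey] with ω hω
      rw [Real.norm_eq_abs, abs_of_nonneg (Real.rpow_nonneg (abs_nonneg _) _)]
      have h0 := Real.rpow_nonneg (abs_nonneg (u ω - v ω)) p
      linarith
    have hCint : Integrable (fun ω => |u ω - v ω| ^ p) P := by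
      refine hbound.mono' hhm.aestronglyMeasurable ?_
      filter_upwards [hkey] with ω hω
      rw [Real.norm_eq_abs, abs_of_nonneg (Real.rpow_nonneg (abs_nonneg _) _)]
      have h0 := Real.rpow_nonneg (abs_nonneg (u ω + v ω)) p
      linarith
    have hint : ∫ ω, (|u ω + v ω| ^ p + |u ω - v ω| ^ p) ∂P ≤
        ∫ ω, (2 * |u ω| ^ p + 4 * p * (|u ω| ^ (p - 2) * v ω ^ 2)) ∂P :=
      integral_mono_ae (hAint.add hCint) hbound hkey
    rw [integral_add hAint hCint,
      integral_add (hBint.const_mul 2) (hMint.const_mul (4 * p)),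
      integral_const_mul, integral_const_mul] at hint
    rw [hRw, hRstar, hQ]
    rw [div_sub_div_same, div_le_iff₀ hpp]
    have heq : 4 / (p - 1) * (∫ ω, |u ω| ^ (p - 2) * v ω ^ 2 ∂P) * (p * (p - 1))
        = 4 * p * (∫ ω, |u ω| ^ (p - 2) * v ω ^ 2 ∂P) := by
      have hne : p - 1 ≠ 0 := by linarith
      field_simp
    linarith
  · -- non-integrable case
    have hAint : ¬ Integrable (fun ω => |u ω + v ω| ^ p) P := by
      intro hA
      apply hBint
      refine ((hA.const_mul 4).add (hMint.const_mul 4)).mono'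
        (by fun_prop : Measurable fun ω => |u ω| ^ p).aestronglyMeasurable ?_
      filter_upwards [huae] with ω hω
      rw [Real.norm_eq_abs, abs_of_nonneg (Real.rpow_nonneg (abs_nonneg _) _)]
      exact my_key3 hp1 hp2 hω
    rw [hRw, hRstar, hQ, integral_undef hAint, integral_undef hBint]
    simp only [zero_div, sub_zero]
    exact mul_nonneg (div_nonneg (by norm_num) (by linarith)) hMnn
end

section
/- Let p ∈ (1, 2) and let s, t ∈ ℝ with s ≠ 0. Then γ_p(|s|, |t − s|) ≤ |s|^{p−2} (t − s)². -/
/-- for `p ∈ (1, 2)` and `s ≠ 0`,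
`γ_p(|s|, |t − s|) ≤ |s|^{p−2} (t − s)²`. -/
theorem gammaP_le_quadratic
    (p : ℝ) (hp1 : 1 < p) (hp2 : p < 2)
    (s t : ℝ) (hs : s ≠ 0) :
    gammaP p |s| |t - s| ≤ |s| ^ (p - 2) * (t - s) ^ 2 := by
  have hspos : (0:ℝ) < |s| := abs_pos.mpr hs
  set a := |s| with ha
  set x := |t - s| with hx
  have hx0 : 0 ≤ x := abs_nonneg _
  have hxsq : x ^ 2 = (t - s) ^ 2 := sq_abs _
  have hap : (0:ℝ) < a ^ (p - 2) := Real.rpow_pos_of_pos hspos _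
  unfold gammaP
  split_ifs with h
  · rw [← hxsq]
    have : p / 2 ≤ 1 := by linarith
    nlinarith [mul_nonneg hap.le (sq_nonneg x)]
  · push_neg at h
    have hx0' : 0 < x := lt_trans hspos h
    have h1 : x ^ p ≤ a ^ (p - 2) * x ^ 2 := by
      have hxp : x ^ p = x ^ (p - 2) * x ^ 2 := by
        rw [show x ^ 2 = x ^ (2:ℝ) by rw [← Real.rpow_natCast]; norm_num,
          ← Real.rpow_add hx0']
        norm_num
      rw [hxp]
      have hle : x ^ (p - 2) ≤ a ^ (p - 2) := by
        apply Real.rpow_le_rpow_of_nonpos hspos h.le (by linarith)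
      nlinarith [sq_nonneg x, Real.rpow_pos_of_pos hx0' (p - 2)]
    have h2 : 0 ≤ (1 - p / 2) * a ^ p := by
      have := Real.rpow_pos_of_pos hspos p
      nlinarith
    rw [← hxsq]
    linarith
end
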